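/- arXiv:2005.02287 — 6 statements merged into one kernel-verified Lean document; each statement's English description precedes it below -/
import Mathlib

section
/- Let u₁, …, u_N : [0,1] → ℝ be continuous functions and define the semi-discrete function u_s(r,θ) = Σ_{j=1}^N u_j(r) e_j(θ) on Q. Then for each index i = 1, …, N, ∫₀¹ r u_i(r)² dr ≤ ((1+Θ)/Θ) ( ‖u_s‖²_{L²_r(Q)} + ‖∂_θ u_s‖²_{L²_r(Q)} ), where ∂_θ u_s(r,θ) = Σ_{j=1}^N u_j(r) e_j′(θ) is defined for θ outside the partition nodes. -/
open MeasureTheory Set Real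

/-- Squared weighted norm `‖v‖²_{L²_r(Q)} = ∫₀¹ ∫₀^Θ v(r,θ)² r dθ dr`, valued in `[0,∞]`. -/
noncomputable def wL2r (Θ : ℝ) (v : ℝ × ℝ → ℝ) : ENNReal :=
  ∫⁻ r in Ioo (0:ℝ) 1, ∫⁻ θ in Ioo (0:ℝ) Θ, ENNReal.ofReal ((v (r, θ)) ^ 2 * r)

/-!
For fixed `r`, `u_i(r)` is the value at `θ_i` of `w = u_s(r, ·)`, which is continuous and
piecewise affine on `[0, Θ]` with derivative `∂_θ u_s(r, ·)` off the nodes. At a point `θ₀`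
where `w²` is minimal, `Θ w(θ₀)² ≤ ∫ w²`, and `|w(θ_i)² - w(θ₀)²| = |∫ 2 w w'| ≤ ∫ (w² + w'²)`.
Hence `u_i(r)² ≤ ((1 + Θ)/Θ) (∫ w² + ∫ w'²)`; multiply by `r` and integrate over `r`.
-/

section OneDim

variable {a b : ℝ} {w w' : ℝ → ℝ}

lemma abs_sq_sub_sq_le_integral {s : Set ℝ} (hs : s.Countable)
    (hw : ContinuousOn w (Icc a b)) (hd : ∀ x ∈ Ioo a b \ s, HasDerivAt w (w' x) x)
    (hw' : MemLp w' 2 (volume.restrict (Ioo a b))) {c d : ℝ} (hac : a ≤ c) (hcd : c ≤ d)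
    (hdb : d ≤ b) :
    |w d ^ 2 - w c ^ 2| ≤ ∫ x in Ioo a b, (w x ^ 2 + w' x ^ 2) := by
  have hG : IntegrableOn (fun x => w x ^ 2 + w' x ^ 2) (Ioo a b) :=
    (((hw.pow 2).integrableOn_Icc).mono_set Ioo_subset_Icc_self).add hw'.integrable_sq
  have hprod_le : ∀ x, ‖2 * w x * w' x‖ ≤ w x ^ 2 + w' x ^ 2 := fun x => by
    rw [Real.norm_eq_abs, abs_le]
    constructor <;> nlinarith [sq_nonneg (w x - w' x), sq_nonneg (w x + w' x)]
  have hprod : IntegrableOn (fun x => 2 * w x * w' x) (Ioo a b) :=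
    hG.mono' ((((hw.mono Ioo_subset_Icc_self).aestronglyMeasurable
      measurableSet_Ioo).const_mul 2).mul hw'.1) (ae_of_all _ hprod_le)
  have hIoc {f : ℝ → ℝ} (hf : IntegrableOn f (Ioo a b)) : IntervalIntegrable f volume c d :=
    (intervalIntegrable_iff_integrableOn_Ioc_of_le hcd).mpr
      (((integrableOn_Ioc_iff_integrableOn_Ioo).mpr hf).mono_set (Ioc_subset_Ioc hac hdb))
  have hftc : ∫ x in c..d, 2 * w x * w' x = w d ^ 2 - w c ^ 2 := by
    refine integral_eq_of_hasDerivAt_off_countable_of_le (fun x => w x ^ 2) _ hcd hs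
      ((hw.mono (Icc_subset_Icc hac hdb)).pow 2) (fun x hx => ?_) (hIoc hprod)
    exact ((hd x ⟨⟨hac.trans_lt hx.1.1, hx.1.2.trans_le hdb⟩, hx.2⟩).fun_pow 2).congr_deriv
      (by ring)
  calc |w d ^ 2 - w c ^ 2| ≤ ∫ x in c..d, (w x ^ 2 + w' x ^ 2) := by
        rw [← hftc, ← Real.norm_eq_abs]
        exact intervalIntegral.norm_integral_le_of_norm_le hcd
          (ae_of_all _ fun x _ => hprod_le x) (hIoc hG)
    _ ≤ ∫ x in Ioo a b, (w x ^ 2 + w' x ^ 2) := by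
        rw [intervalIntegral.integral_of_le hcd, ← integral_Ioc_eq_integral_Ioo]
        exact setIntegral_mono_set ((integrableOn_Ioc_iff_integrableOn_Ioo).mpr hG)
          (ae_of_all _ fun x => by positivity) (Ioc_subset_Ioc hac hdb).eventuallyLE

lemma exists_mem_Icc_mul_sq_le_integral (hab : a ≤ b) (hw : ContinuousOn w (Icc a b)) :
    ∃ y ∈ Icc a b, (b - a) * w y ^ 2 ≤ ∫ x in Ioo a b, w x ^ 2 := by
  obtain ⟨y, hy, hmin⟩ := isCompact_Icc.exists_isMinOn (nonempty_Icc.mpr hab) (hw.pow 2)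
  refine ⟨y, hy, ?_⟩
  calc (b - a) * w y ^ 2 = ∫ _ in Ioo a b, w y ^ 2 := by
        rw [setIntegral_const, Real.volume_real_Ioo_of_le hab, smul_eq_mul]
    _ ≤ ∫ x in Ioo a b, w x ^ 2 :=
        setIntegral_mono_on (integrableOn_const (by simp))
          (((hw.pow 2).integrableOn_Icc).mono_set Ioo_subset_Icc_self) measurableSet_Ioo
          fun x hx => hmin (Ioo_subset_Icc_self hx)

lemma sq_le_integral_sq_add_integral_sq {s : Set ℝ} (hab : a < b) (hs : s.Countable)
    (hw : ContinuousOn w (Icc a b)) (hd : ∀ x ∈ Ioo a b \ s, HasDerivAt w (w' x) x)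
    (hw' : MemLp w' 2 (volume.restrict (Ioo a b))) {p : ℝ} (hp : p ∈ Icc a b) :
    w p ^ 2 ≤ (1 + (b - a)) / (b - a) *
      ((∫ x in Ioo a b, w x ^ 2) + ∫ x in Ioo a b, w' x ^ 2) := by
  obtain ⟨y, hy, hmean⟩ := exists_mem_Icc_mul_sq_le_integral hab.le hw
  have hvar : w p ^ 2 ≤ w y ^ 2 + ∫ x in Ioo a b, (w x ^ 2 + w' x ^ 2) := by
    rcases le_total y p with h | h
    · have := abs_sq_sub_sq_le_integral hs hw hd hw' hy.1 h hp.2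
      linarith [le_abs_self (w p ^ 2 - w y ^ 2)]
    · have := abs_sq_sub_sq_le_integral hs hw hd hw' hp.1 h hy.2
      linarith [neg_abs_le (w y ^ 2 - w p ^ 2)]
  have hw2 : IntegrableOn (fun x => w x ^ 2) (Ioo a b) :=
    ((hw.pow 2).integrableOn_Icc).mono_set Ioo_subset_Icc_self
  rw [integral_add hw2 hw'.integrable_sq] at hvar
  have hL : 0 < b - a := sub_pos.mpr hab
  have hw0 : 0 ≤ ∫ x in Ioo a b, w x ^ 2 :=
    setIntegral_nonneg measurableSet_Ioo fun x _ => sq_nonneg _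
  have hw'0 : 0 ≤ ∫ x in Ioo a b, w' x ^ 2 :=
    setIntegral_nonneg measurableSet_Ioo fun x _ => sq_nonneg _
  rw [div_mul_eq_mul_div, le_div_iff₀ hL]
  nlinarith

lemma ofReal_sq_le_lintegral_sq_add_lintegral_sq {s : Set ℝ} (hab : a < b) (hs : s.Countable)
    (hw : ContinuousOn w (Icc a b)) (hd : ∀ x ∈ Ioo a b \ s, HasDerivAt w (w' x) x)
    (hw' : AEStronglyMeasurable w' (volume.restrict (Ioo a b))) {p : ℝ} (hp : p ∈ Icc a b) :
    ENNReal.ofReal (w p ^ 2) ≤ ENNReal.ofReal ((1 + (b - a)) / (b - a)) *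
      ((∫⁻ x in Ioo a b, ENNReal.ofReal (w x ^ 2)) +
        ∫⁻ x in Ioo a b, ENNReal.ofReal (w' x ^ 2)) := by
  have hsq_nonneg (f : ℝ → ℝ) : 0 ≤ᵐ[volume.restrict (Ioo a b)] fun x => f x ^ 2 :=
    ae_of_all _ fun x => sq_nonneg (f x)
  by_cases hfin : ∫⁻ x in Ioo a b, ENNReal.ofReal (w' x ^ 2) = ⊤
  · have hC : ENNReal.ofReal ((1 + (b - a)) / (b - a)) ≠ 0 := by
      have := sub_pos.mpr hab
      positivity
    rw [hfin, add_top, ENNReal.mul_top hC]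
    exact le_top
  have hmem : MemLp w' 2 (volume.restrict (Ioo a b)) :=
    (memLp_two_iff_integrable_sq hw').mpr ⟨hw'.pow 2,
      (hasFiniteIntegral_iff_ofReal (hsq_nonneg w')).mpr (lt_top_iff_ne_top.mpr hfin)⟩
  have hw2 : IntegrableOn (fun x => w x ^ 2) (Ioo a b) :=
    ((hw.pow 2).integrableOn_Icc).mono_set Ioo_subset_Icc_self
  rw [← ofReal_integral_eq_lintegral_ofReal hw2 (hsq_nonneg w),
    ← ofReal_integral_eq_lintegral_ofReal hmem.integrable_sq (hsq_nonneg w'),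
    ← ENNReal.ofReal_add (integral_nonneg_of_ae (hsq_nonneg w))
      (integral_nonneg_of_ae (hsq_nonneg w')),
    ← ENNReal.ofReal_mul (by have := sub_pos.mpr hab; positivity)]
  exact ENNReal.ofReal_le_ofReal (sq_le_integral_sq_add_integral_sq hab hs hw hd hmem hp)

end OneDim

lemma exists_lt_mem_Ico_of_mem_Ico {α : Type*} [LinearOrder α] (t : ℕ → α) {x : α} :
    ∀ {n : ℕ}, x ∈ Ico (t 0) (t n) → ∃ k < n, x ∈ Ico (t k) (t (k + 1))
  | 0, hx => absurd hx (by simp)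
  | n + 1, hx => by
    by_cases h : x < t n
    · obtain ⟨k, hk, hxk⟩ := exists_lt_mem_Ico_of_mem_Ico t ⟨hx.1, h⟩
      exact ⟨k, hk.trans n.lt_succ_self, hxk⟩
    · exact ⟨n, n.lt_succ_self, not_lt.mp h, hx.2⟩

def IsPiecewiseAffine (N : ℕ) (t : ℕ → ℝ) (f : ℝ → ℝ) : Prop :=
  ∀ k, k + 1 < N → ∀ x ∈ Icc (t k) (t (k + 1)),
    f x = f (t k) + (f (t (k + 1)) - f (t k)) * (x - t k) / (t (k + 1) - t k)

namespace IsPiecewiseAffine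

variable {N : ℕ} {t : ℕ → ℝ} {f : ℝ → ℝ}

lemma continuousOn_Icc (hf : IsPiecewiseAffine N t f) (ht : MonotoneOn t (Iio N)) :
    ∀ {n}, n < N → ContinuousOn f (Icc (t 0) (t n))
  | 0, _ => by simp [continuousOn_singleton]
  | m + 1, hm => by
    have hpiece : ContinuousOn f (Icc (t m) (t (m + 1))) :=
      ContinuousOn.congr (by fun_prop) (hf m hm)
    rw [← Icc_union_Icc_eq_Icc (ht (by simp; omega) (by simp; omega) m.zero_le)
      (ht (by simp; omega) (by simpa using hm) m.le_succ)]
    exact (hf.continuousOn_Icc ht (by omega)).union_of_isClosed hpiece isClosed_Icc isClosed_Icc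

lemma differentiableAt (hf : IsPiecewiseAffine N t f) {k : ℕ} (hk : k + 1 < N) {x : ℝ}
    (hx : x ∈ Ioo (t k) (t (k + 1))) : DifferentiableAt ℝ f x := by
  have haffine : DifferentiableAt ℝ
      (fun y => f (t k) + (f (t (k + 1)) - f (t k)) * (y - t k) / (t (k + 1) - t k)) x := by
    fun_prop
  refine haffine.congr_of_eventuallyEq ?_
  filter_upwards [Ioo_mem_nhds hx.1 hx.2] with y hy
  exact hf k hk y (Ioo_subset_Icc_self hy)

end IsPiecewiseAffine

section HatBasis

variable {Θ : ℝ} {N : ℕ} {t : ℕ → ℝ} {e : ℕ → ℝ → ℝ}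

lemma sum_mul_apply_node (hnode : ∀ i < N, ∀ j < N, e i (t j) = if i = j then 1 else 0)
    (a : ℕ → ℝ) {i : ℕ} (hi : i < N) : ∑ j ∈ Finset.range N, a j * e j (t i) = a i := by
  rw [Finset.sum_eq_single_of_mem i (Finset.mem_range.mpr hi) fun j hj hji => by
    simp [hnode j (Finset.mem_range.mp hj) i hi, hji], hnode i hi i hi, if_pos rfl, mul_one]

lemma ofReal_sq_le_lintegral_hat_sum (hΘ : 0 < Θ) (ht0 : t 0 = 0) (htN : t (N - 1) = Θ)
    (htmono : ∀ j, j + 1 < N → t j < t (j + 1))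
    (hnode : ∀ i < N, ∀ j < N, e i (t j) = if i = j then 1 else 0)
    (hlin : ∀ i < N, IsPiecewiseAffine N t (e i)) (a : ℕ → ℝ) {i : ℕ} (hi : i < N) :
    ENNReal.ofReal (a i ^ 2) ≤ ENNReal.ofReal ((1 + Θ) / Θ) *
      ((∫⁻ θ in Ioo 0 Θ, ENNReal.ofReal ((∑ j ∈ Finset.range N, a j * e j θ) ^ 2)) +
        ∫⁻ θ in Ioo 0 Θ,
          ENNReal.ofReal ((∑ j ∈ Finset.range N, a j * deriv (e j) θ) ^ 2)) := by
  have hmono : MonotoneOn t (Iio N) :=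
    monotoneOn_of_le_succ ordConnected_Iio fun k _ _ hk => (htmono k (by simpa using hk)).le
  have hcont : ContinuousOn (fun θ => ∑ j ∈ Finset.range N, a j * e j θ) (Icc 0 Θ) := by
    rw [← ht0, ← htN]
    exact continuousOn_finsetSum _ fun j hj =>
      ((hlin j (Finset.mem_range.mp hj)).continuousOn_Icc hmono (by omega)).const_smul (a j)
  have hderiv : ∀ θ ∈ Ioo 0 Θ \ t '' Iio N,
      HasDerivAt (fun θ => ∑ j ∈ Finset.range N, a j * e j θ)
        (∑ j ∈ Finset.range N, a j * deriv (e j) θ) θ := by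
    rintro θ ⟨hθ, hθnode⟩
    obtain ⟨k, hk, hθk⟩ := exists_lt_mem_Ico_of_mem_Ico t (n := N - 1)
      (by rw [ht0, htN]; exact Ioo_subset_Ico_self hθ)
    have hθk' : θ ∈ Ioo (t k) (t (k + 1)) :=
      ⟨hθk.1.lt_of_ne fun h => hθnode ⟨k, by simp; omega, h⟩, hθk.2⟩
    exact HasDerivAt.fun_sum fun j hj =>
      ((hlin j (Finset.mem_range.mp hj)).differentiableAt (by omega) hθk').hasDerivAt.const_mul
        (a j)
  have hnodes : (t '' Iio N).Countable := ((finite_Iio N).image t).countable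
  have hmeas : AEStronglyMeasurable (fun θ => ∑ j ∈ Finset.range N, a j * deriv (e j) θ)
      (volume.restrict (Ioo 0 Θ)) :=
    (Finset.measurable_sum _ fun j _ => (measurable_deriv _).const_mul (a j)).aestronglyMeasurable
  have hti : t i ∈ Icc 0 Θ := by
    rw [← ht0, ← htN]
    exact ⟨hmono (by simp; omega) (by simpa using hi) i.zero_le,
      hmono (by simpa using hi) (by simp; omega) (by omega)⟩
  simpa [sum_mul_apply_node hnode a hi] using
    ofReal_sq_le_lintegral_sq_add_lintegral_sq hΘ hnodes hcont hderiv hmeas hti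

end HatBasis

lemma lintegral_ofReal_mul_const {α : Type*} [MeasurableSpace α] (μ : Measure α)
    {f : α → ℝ} (hf : ∀ x, 0 ≤ f x) {r : ℝ} :
    ∫⁻ x, ENNReal.ofReal (f x * r) ∂μ =
      (∫⁻ x, ENNReal.ofReal (f x) ∂μ) * ENNReal.ofReal r := by
  rw [← lintegral_mul_const' _ _ ENNReal.ofReal_ne_top]
  exact lintegral_congr fun x => ENNReal.ofReal_mul (hf x)

lemma aemeasurable_lintegral_ofReal_sq_sum_mul {N : ℕ} {u g : ℕ → ℝ → ℝ}
    {s : Set ℝ} (hs : MeasurableSet s) (hu : ∀ j < N, ContinuousOn (u j) s)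
    (hg : ∀ j, Measurable (g j)) (ν : Measure ℝ) [SFinite ν] :
    AEMeasurable
      (fun r => ∫⁻ θ, ENNReal.ofReal ((∑ j ∈ Finset.range N, u j r * g j θ) ^ 2 * r) ∂ν)
      (volume.restrict s) := by
  have hsum : AEMeasurable (fun p : ℝ × ℝ => ∑ j ∈ Finset.range N, u j p.1 * g j p.2)
      ((volume.restrict s).prod ν) :=
    Finset.aemeasurable_fun_sum _ fun j hj =>
      ((hu j (Finset.mem_range.mp hj)).aemeasurable hs).comp_fst.mul
        ((hg j).comp measurable_snd).aemeasurable
  exact ((hsum.pow_const 2).mul measurable_fst.aemeasurable).ennreal_ofReal.lintegral_prod_right'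

theorem stmt4_general (Θ : ℝ) (hΘ₀ : 0 < Θ)
    (N : ℕ) (t : ℕ → ℝ) (e : ℕ → ℝ → ℝ)
    (ht0 : t 0 = 0) (htN : t (N - 1) = Θ)
    (htmono : ∀ j, j + 1 < N → t j < t (j + 1))
    (hnode : ∀ i < N, ∀ j < N, e i (t j) = if i = j then 1 else 0)
    (hlin : ∀ i < N, ∀ j, j + 1 < N → ∀ x ∈ Icc (t j) (t (j + 1)),
      e i x = e i (t j) + (e i (t (j + 1)) - e i (t j)) * (x - t j) / (t (j + 1) - t j))
    (u : ℕ → ℝ → ℝ) (hu : ∀ j < N, ContinuousOn (u j) (Icc (0:ℝ) 1))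
    (us : ℝ × ℝ → ℝ) (hus : ∀ p, us p = ∑ j ∈ Finset.range N, u j p.1 * e j p.2)
    (dus : ℝ × ℝ → ℝ) (hdus : ∀ p, dus p = ∑ j ∈ Finset.range N, u j p.1 * deriv (e j) p.2) :
    ∀ i < N,
      (∫⁻ r in Ioo (0:ℝ) 1, ENNReal.ofReal (r * (u i r) ^ 2))
        ≤ ENNReal.ofReal ((1 + Θ) / Θ) * (wL2r Θ us + wL2r Θ dus) := by
  intro i hi
  have hslice : ∀ r ∈ Ioo (0:ℝ) 1, ENNReal.ofReal (r * u i r ^ 2) ≤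
      ENNReal.ofReal ((1 + Θ) / Θ) *
        ((∫⁻ θ in Ioo 0 Θ, ENNReal.ofReal (us (r, θ) ^ 2 * r)) +
          ∫⁻ θ in Ioo 0 Θ, ENNReal.ofReal (dus (r, θ) ^ 2 * r)) := by
    intro r hr
    rw [lintegral_ofReal_mul_const _ fun θ => sq_nonneg (us (r, θ)),
      lintegral_ofReal_mul_const _ fun θ => sq_nonneg (dus (r, θ)), mul_comm r,
      ENNReal.ofReal_mul (sq_nonneg _), ← add_mul, ← mul_assoc]
    gcongr
    simpa only [hus, hdus] using
      ofReal_sq_le_lintegral_hat_sum hΘ₀ ht0 htN htmono hnode hlin (fun j => u j r) hi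
  have hdus_meas : AEMeasurable
      (fun r => ∫⁻ θ in Ioo 0 Θ, ENNReal.ofReal (dus (r, θ) ^ 2 * r))
      (volume.restrict (Ioo 0 1)) := by
    simp_rw [hdus]
    exact aemeasurable_lintegral_ofReal_sq_sum_mul measurableSet_Ioo
      (fun j hj => (hu j hj).mono Ioo_subset_Icc_self) (fun j => measurable_deriv _) _
  calc (∫⁻ r in Ioo (0:ℝ) 1, ENNReal.ofReal (r * (u i r) ^ 2))
      ≤ ∫⁻ r in Ioo (0:ℝ) 1, ENNReal.ofReal ((1 + Θ) / Θ) *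
          ((∫⁻ θ in Ioo 0 Θ, ENNReal.ofReal (us (r, θ) ^ 2 * r)) +
            ∫⁻ θ in Ioo 0 Θ, ENNReal.ofReal (dus (r, θ) ^ 2 * r)) :=
        setLIntegral_mono' measurableSet_Ioo hslice
    _ = ENNReal.ofReal ((1 + Θ) / Θ) * (wL2r Θ us + wL2r Θ dus) := by
        rw [lintegral_const_mul' _ _ ENNReal.ofReal_ne_top, lintegral_add_right' _ hdus_meas]
        rfl

/-- Radial trace inequality for semi-discrete functions
`u_s(r,θ) = Σ_j u_j(r) e_j(θ)`: for every node index `i`,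
`∫₀¹ r u_i(r)² dr ≤ ((1+Θ)/Θ)(‖u_s‖²_{L²_r(Q)} + ‖∂_θ u_s‖²_{L²_r(Q)})`,
where `∂_θ u_s(r,θ) = Σ_j u_j(r) e_j′(θ)` outside the partition nodes.
Here `0 = t 0 < t 1 < ⋯ < t (N-1) = Θ` is the partition and `e j` are the
continuous piecewise linear hat functions with `e i (t j) = δ_{ij}`. -/
theorem stmt4 (Θ : ℝ) (hΘ₀ : 0 < Θ) (hΘ₂ : Θ < 2 * π)
    (N : ℕ) (hN : 2 ≤ N) (t : ℕ → ℝ) (e : ℕ → ℝ → ℝ)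
    (ht0 : t 0 = 0) (htN : t (N - 1) = Θ)
    (htmono : ∀ j, j + 1 < N → t j < t (j + 1))
    (hnode : ∀ i < N, ∀ j < N, e i (t j) = if i = j then 1 else 0)
    (hlin : ∀ i < N, ∀ j, j + 1 < N → ∀ x ∈ Icc (t j) (t (j + 1)),
      e i x = e i (t j) + (e i (t (j + 1)) - e i (t j)) * (x - t j) / (t (j + 1) - t j))
    (u : ℕ → ℝ → ℝ) (hu : ∀ j < N, ContinuousOn (u j) (Icc (0:ℝ) 1))
    (us : ℝ × ℝ → ℝ) (hus : ∀ p, us p = ∑ j ∈ Finset.range N, u j p.1 * e j p.2)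
    (dus : ℝ × ℝ → ℝ) (hdus : ∀ p, dus p = ∑ j ∈ Finset.range N, u j p.1 * deriv (e j) p.2) :
    ∀ i < N,
      (∫⁻ r in Ioo (0:ℝ) 1, ENNReal.ofReal (r * (u i r) ^ 2))
        ≤ ENNReal.ofReal ((1 + Θ) / Θ) * (wL2r Θ us + wL2r Θ dus) :=
  stmt4_general Θ hΘ₀ N t e ht0 htN htmono hnode hlin u hu us hus dus hdus
end

section
/- There exists a constant C > 0, depending only on Θ, N and the partition θ₁ < ⋯ < θ_N, such that for every twice continuously differentiable function u on [0,1] × [0,Θ], the interpolant Πu satisfies ‖Πu‖²_{L²_r(Q)} + ‖∂_r Πu‖²_{L²_r(Q)} + ‖∂_θ Πu‖²_{L²_{1/r}(Q)} ≤ C ( ‖u‖²_{L²_r(Q)} + ‖∂_r u‖²_{L²_r(Q)} + ‖∂_θ u‖²_{L²_{1/r}(Q)} + ‖∂_{rθ} u‖²_{L²_r(Q)} ), where the inequality holds in [0,∞]; in particular, if the right-hand side is finite then Πu, ∂_r Πu have finite L²_r(Q)-norm and ∂_θ Πu has finite L²_{1/r}(Q)-norm. -/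
open MeasureTheory Set Real

/-- Squared weighted norm `‖v‖²_{L²_{1/r}(Q)} = ∫₀¹ ∫₀^Θ v(r,θ)² (1/r) dθ dr`. -/
noncomputable def wL2invr (Θ : ℝ) (v : ℝ × ℝ → ℝ) : ENNReal :=
  ∫⁻ r in Ioo (0:ℝ) 1, ∫⁻ θ in Ioo (0:ℝ) Θ, ENNReal.ofReal ((v (r, θ)) ^ 2 / r)

/-- Partial derivative with respect to the first (radial) variable. -/
noncomputable def pd1 (u : ℝ × ℝ → ℝ) (p : ℝ × ℝ) : ℝ := deriv (fun s => u (s, p.2)) p.1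

/-- Partial derivative with respect to the second (angular) variable. -/
noncomputable def pd2 (u : ℝ × ℝ → ℝ) (p : ℝ × ℝ) : ℝ := deriv (fun t => u (p.1, t)) p.2

/-- The interpolant `(Πu)(r,θ) = Σ_i u(r, θ_i) e_i(θ)`. -/
noncomputable def interp (N : ℕ) (t : ℕ → ℝ) (e : ℕ → ℝ → ℝ) (u : ℝ × ℝ → ℝ) :
    ℝ × ℝ → ℝ :=
  fun p => ∑ i ∈ Finset.range N, u (p.1, t i) * e i p.2

/-!
For fixed `r`, on each segment `[θⱼ, θⱼ₊₁]` the interpolant is a convex combination of the nodal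
values `u(r, θⱼ)`, `u(r, θⱼ₊₁)`, and `∂_r` commutes with `Π`. The one-dimensional trace inequality
`f(c)² ≤ (1/Θ + 1) (‖f‖² + ‖f'‖²)` on `[0, Θ]` bounds the nodal values, which controls `Πu` and
`∂_r Πu` (the `∂_θ u` term is then moved to `L²_{1/r}` using `r ≤ 1/r`). The angular derivative of
`Πu` is a difference quotient, whose square is at most the mean of `(∂_θ u)²` over the segment
(Jensen), hence at most `‖∂_θ u(r, ·)‖² / h` for the smallest gap `h` of the partition.
Integrating in `r` gives `C = 2 (1 + Θ) + Θ / h`.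
-/

section OneDim

variable {a b : ℝ} {f f' : ℝ → ℝ}

lemma sq_mul_one_sub_add_mul_le (x y l : ℝ) (h0 : 0 ≤ l) (h1 : l ≤ 1) :
    (x * (1 - l) + y * l) ^ 2 ≤ x ^ 2 + y ^ 2 := by
  nlinarith [mul_nonneg (mul_nonneg h0 (sub_nonneg.2 h1)) (sq_nonneg (x - y)),
    mul_nonneg h0 (sq_nonneg y), mul_nonneg (sub_nonneg.2 h1) (sq_nonneg x)]

lemma aestronglyMeasurable_of_hasDerivAt (hd : ∀ x ∈ Ioo a b, HasDerivAt f (f' x) x) :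
    AEStronglyMeasurable f' (volume.restrict (Ioo a b)) :=
  (measurable_deriv f).aestronglyMeasurable.congr <|
    ae_restrict_of_forall_mem measurableSet_Ioo fun x hx => (hd x hx).deriv

lemma integrableOn_of_hasDerivAt_of_integrableOn_sq (hd : ∀ x ∈ Ioo a b, HasDerivAt f (f' x) x)
    (hf' : IntegrableOn (fun x => f' x ^ 2) (Ioo a b)) : IntegrableOn f' (Ioo a b) :=
  ((memLp_two_iff_integrable_sq (aestronglyMeasurable_of_hasDerivAt hd)).2 hf').integrable
    one_le_two

lemma sub_eq_setIntegral_of_hasDerivAt {p q : ℝ} (hp : a ≤ p) (hpq : p ≤ q) (hq : q ≤ b)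
    (hc : ContinuousOn f (Icc a b)) (hd : ∀ x ∈ Ioo a b, HasDerivAt f (f' x) x)
    (hf' : IntegrableOn f' (Ioo a b)) :
    f q - f p = ∫ x in Ioo p q, f' x := by
  have hsub : Ioo p q ⊆ Ioo a b := Ioo_subset_Ioo hp hq
  rw [← integral_Ioc_eq_integral_Ioo, ← intervalIntegral.integral_of_le hpq,
    intervalIntegral.integral_eq_sub_of_hasDerivAt_of_le hpq
      (hc.mono (Icc_subset_Icc hp hq)) (fun x hx => hd x (hsub hx))]
  exact (intervalIntegrable_iff_integrableOn_Ioo_of_le hpq).2 (hf'.mono_set hsub)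

lemma sq_slope_le (hc : ContinuousOn f (Icc a b)) (hd : ∀ x ∈ Ioo a b, HasDerivAt f (f' x) x)
    (hf' : IntegrableOn (fun x => f' x ^ 2) (Ioo a b)) {p q : ℝ} (hp : a ≤ p) (hpq : p < q)
    (hq : q ≤ b) :
    ((f q - f p) / (q - p)) ^ 2 ≤ (∫ x in Ioo a b, f' x ^ 2) / (q - p) := by
  have hsub : Ioo p q ⊆ Ioo a b := Ioo_subset_Ioo hp hq
  have hvol : volume.real (Ioo p q) = q - p := by simp [hpq.le]
  have hjensen := (Even.convexOn_pow (𝕜 := ℝ) even_two).map_set_average_le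
    (continuous_pow 2).continuousOn isClosed_univ (μ := volume) (t := Ioo p q) (f := f')
    (by simp [hpq]) (by simp) (by simp)
    ((integrableOn_of_hasDerivAt_of_integrableOn_sq hd hf').mono_set hsub) (hf'.mono_set hsub)
  rw [setAverage_eq, setAverage_eq, hvol, smul_eq_mul, smul_eq_mul,
    ← sub_eq_setIntegral_of_hasDerivAt hp hpq.le hq hc hd
      (integrableOn_of_hasDerivAt_of_integrableOn_sq hd hf')] at hjensen
  calc ((f q - f p) / (q - p)) ^ 2 ≤ (∫ x in Ioo p q, f' x ^ 2) / (q - p) := by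
        simpa only [inv_mul_eq_div, Function.comp_def] using hjensen
    _ ≤ (∫ x in Ioo a b, f' x ^ 2) / (q - p) := by
        gcongr
        exact ae_of_all _ fun _ => sq_nonneg _

lemma sq_le_of_hasDerivAt (hab : a < b) (hc : ContinuousOn f (Icc a b))
    (hd : ∀ x ∈ Ioo a b, HasDerivAt f (f' x) x)
    (hf' : IntegrableOn (fun x => f' x ^ 2) (Ioo a b)) {c : ℝ} (hc' : c ∈ Icc a b) :
    f c ^ 2 ≤ (1 / (b - a) + 1) * ((∫ x in Ioo a b, f x ^ 2) + ∫ x in Ioo a b, f' x ^ 2) := by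
  set E := (∫ x in Ioo a b, f x ^ 2) + ∫ x in Ioo a b, f' x ^ 2
  have hf : IntegrableOn (fun x => f x ^ 2) (Ioo a b) :=
    ((hc.pow 2).integrableOn_Icc).mono_set Ioo_subset_Icc_self
  have hff' : IntegrableOn (fun x => 2 * f x * f' x) (Ioo a b) := by
    refine (hf.add hf').mono' (((hc.mono Ioo_subset_Icc_self).aestronglyMeasurable
      measurableSet_Ioo).const_mul 2 |>.mul (aestronglyMeasurable_of_hasDerivAt hd)) ?_
    refine ae_of_all _ fun x => ?_
    simp only [norm_mul, Real.norm_eq_abs, abs_two, Pi.add_apply]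
    nlinarith [sq_nonneg (|f x| - |f' x|), sq_abs (f x), sq_abs (f' x)]
  -- `f²` has derivative `2 f f'`, which is dominated by `f² + f'²`
  have hvar : ∀ p ∈ Icc a b, ∀ q ∈ Icc a b, p ≤ q → |f q ^ 2 - f p ^ 2| ≤ E := by
    intro p hp q hq hpq
    rw [sub_eq_setIntegral_of_hasDerivAt (f := fun x => f x ^ 2) hp.1 hpq hq.2 (hc.pow 2)
      (fun x hx => by simpa [mul_comm] using (hd x hx).fun_pow 2) hff']
    calc |∫ x in Ioo p q, 2 * f x * f' x| ≤ ∫ x in Ioo p q, |2 * f x * f' x| :=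
          abs_integral_le_integral_abs
      _ ≤ ∫ x in Ioo a b, |2 * f x * f' x| := setIntegral_mono_set hff'.abs
          (ae_of_all _ fun _ => abs_nonneg _) (Ioo_subset_Ioo hp.1 hq.2).eventuallyLE
      _ ≤ ∫ x in Ioo a b, (f x ^ 2 + f' x ^ 2) := setIntegral_mono hff'.abs (hf.add hf') fun x => by
          simp only [abs_mul, abs_two]
          nlinarith [sq_nonneg (|f x| - |f' x|), sq_abs (f x), sq_abs (f' x)]
      _ = E := integral_add hf hf'
  obtain ⟨y, hy, hymean⟩ := exists_le_setAverage (μ := volume) (s := Ioo a b) (by simp [hab])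
    (by simp) hf
  rw [setAverage_eq, smul_eq_mul, Real.volume_real_Ioo_of_le hab.le, inv_eq_one_div] at hymean
  have hcy : f c ^ 2 ≤ f y ^ 2 + E := by
    rcases le_total y c with h | h
    · linarith [(abs_le.1 (hvar y (Ioo_subset_Icc_self hy) c hc' h)).2]
    · linarith [(abs_le.1 (hvar c hc' y (Ioo_subset_Icc_self hy) h)).1]
  have hfE : ∫ x in Ioo a b, f x ^ 2 ≤ E :=
    le_add_of_nonneg_right (setIntegral_nonneg measurableSet_Ioo fun _ _ => sq_nonneg _)
  have hba : 0 ≤ 1 / (b - a) := by simp only [one_div, inv_nonneg, sub_nonneg, hab.le]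
  nlinarith [mul_le_mul_of_nonneg_left hfE hba]

end OneDim

structure IsHatBasis (Θ : ℝ) (N : ℕ) (t : ℕ → ℝ) (e : ℕ → ℝ → ℝ) : Prop where
  two_le : 2 ≤ N
  node_zero : t 0 = 0
  node_last : t (N - 1) = Θ
  node_lt_succ : ∀ j, j + 1 < N → t j < t (j + 1)
  apply_node : ∀ i < N, ∀ j < N, e i (t j) = if i = j then 1 else 0
  linear : ∀ i < N, ∀ j, j + 1 < N → ∀ x ∈ Icc (t j) (t (j + 1)),
    e i x = e i (t j) + (e i (t (j + 1)) - e i (t j)) * (x - t j) / (t (j + 1) - t j)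

namespace IsHatBasis

variable {Θ : ℝ} {N : ℕ} {t : ℕ → ℝ} {e : ℕ → ℝ → ℝ}

lemma strictMonoOn (hB : IsHatBasis Θ N t e) : StrictMonoOn t (Iic (N - 1)) :=
  strictMonoOn_Iic_of_lt_succ fun m hm => hB.node_lt_succ m (by omega)

lemma pos (hB : IsHatBasis Θ N t e) : 0 < Θ := by
  rw [← hB.node_zero, ← hB.node_last]
  exact hB.strictMonoOn (by simp) (by simp) (by have := hB.two_le; omega)

lemma exists_pos_le_gap (hB : IsHatBasis Θ N t e) :
    ∃ h > 0, ∀ j, j + 1 < N → h ≤ t (j + 1) - t j := by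
  obtain ⟨j₀, hj₀, hmin⟩ := (Finset.range (N - 1)).exists_min_image (fun j => t (j + 1) - t j)
    ⟨0, Finset.mem_range.2 (by have := hB.two_le; omega)⟩
  refine ⟨t (j₀ + 1) - t j₀, sub_pos.2 (hB.node_lt_succ j₀ ?_), fun j hj => hmin j ?_⟩
  · have := Finset.mem_range.1 hj₀; omega
  · exact Finset.mem_range.2 (by omega)

lemma node_mem_Icc (hB : IsHatBasis Θ N t e) {i : ℕ} (hi : i < N) : t i ∈ Icc 0 Θ := by
  rw [← hB.node_zero, ← hB.node_last]
  exact ⟨hB.strictMonoOn.monotoneOn (by simp) (by simp; omega) (Nat.zero_le i),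
    hB.strictMonoOn.monotoneOn (by simp; omega) (by simp) (by omega)⟩

lemma exists_mem_Ioo (hB : IsHatBasis Θ N t e) {θ : ℝ} (hθ : θ ∈ Ioo 0 Θ)
    (hnode : ∀ k < N, t k ≠ θ) : ∃ j, j + 1 < N ∧ θ ∈ Ioo (t j) (t (j + 1)) := by
  classical
  set j := Nat.findGreatest (fun k => t k < θ) (N - 1)
  have hj : t j < θ := Nat.findGreatest_spec (P := fun k => t k < θ) (Nat.zero_le _)
    (by simpa [hB.node_zero] using hθ.1)
  have hjN : j + 1 < N := by
    have : j ≠ N - 1 := fun h => by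
      rw [h, hB.node_last] at hj
      exact hθ.2.not_gt hj
    have := Nat.findGreatest_le (P := fun k => t k < θ) (N - 1)
    omega
  refine ⟨j, hjN, hj, lt_of_le_of_ne ?_ (hnode _ hjN).symm⟩
  exact not_lt.1 (Nat.findGreatest_is_greatest (Nat.lt_succ_self j) (by omega))

lemma ae_exists_mem_Ioo (hB : IsHatBasis Θ N t e) :
    ∀ᵐ θ ∂volume.restrict (Ioo 0 Θ), ∃ j, j + 1 < N ∧ θ ∈ Ioo (t j) (t (j + 1)) := by
  have hnull : ∀ᵐ θ ∂volume.restrict (Ioo 0 Θ), θ ∉ t '' Iio N :=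
    ae_restrict_of_ae (measure_eq_zero_iff_ae_notMem.1 (((finite_Iio N).image t).measure_zero _))
  filter_upwards [ae_restrict_mem measurableSet_Ioo, hnull] with θ hθ hθnode
  exact hB.exists_mem_Ioo hθ fun k hk hkθ => hθnode ⟨k, hk, hkθ⟩

lemma sum_mul_eq (hB : IsHatBasis Θ N t e) {j : ℕ} (hj : j + 1 < N) {θ : ℝ}
    (hθ : θ ∈ Icc (t j) (t (j + 1))) (a : ℕ → ℝ) :
    ∑ i ∈ Finset.range N, a i * e i θ = a j * (1 - (θ - t j) / (t (j + 1) - t j))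
      + a (j + 1) * ((θ - t j) / (t (j + 1) - t j)) := by
  set l := (θ - t j) / (t (j + 1) - t j)
  have he : ∀ i ∈ Finset.range N,
      e i θ = (if i = j then 1 else 0) * (1 - l) + (if i = j + 1 then 1 else 0) * l := by
    intro i hi
    rw [hB.linear i (Finset.mem_range.1 hi) j hj θ hθ,
      hB.apply_node i (Finset.mem_range.1 hi) j (by omega),
      hB.apply_node i (Finset.mem_range.1 hi) (j + 1) hj]
    ring
  rw [Finset.sum_congr rfl fun i hi => by rw [he i hi]]
  simp [mul_add, Finset.sum_add_distrib, hj, show j < N by omega]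

lemma sq_sum_mul_le (hB : IsHatBasis Θ N t e) {f f' : ℝ → ℝ} (hc : ContinuousOn f (Icc 0 Θ))
    (hd : ∀ x ∈ Ioo 0 Θ, HasDerivAt f (f' x) x)
    (hf' : IntegrableOn (fun x => f' x ^ 2) (Ioo 0 Θ)) {j : ℕ} (hj : j + 1 < N) {θ : ℝ}
    (hθ : θ ∈ Icc (t j) (t (j + 1))) :
    (∑ i ∈ Finset.range N, f (t i) * e i θ) ^ 2
      ≤ 2 * (1 / Θ + 1) * ((∫ x in Ioo 0 Θ, f x ^ 2) + ∫ x in Ioo 0 Θ, f' x ^ 2) := by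
  have hl : 0 ≤ (θ - t j) / (t (j + 1) - t j) ∧ (θ - t j) / (t (j + 1) - t j) ≤ 1 := by
    have := hB.node_lt_succ j hj
    exact ⟨div_nonneg (by linarith [hθ.1]) (by linarith),
      (div_le_one (by linarith)).2 (by linarith [hθ.2])⟩
  have htrace := fun i (hi : i < N) => by
    simpa only [sub_zero] using sq_le_of_hasDerivAt hB.pos hc hd hf' (hB.node_mem_Icc hi)
  rw [hB.sum_mul_eq hj hθ]
  linarith [sq_mul_one_sub_add_mul_le (f (t j)) (f (t (j + 1))) _ hl.1 hl.2, htrace j (by omega),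
    htrace (j + 1) hj]

lemma deriv_sum_mul_eq (hB : IsHatBasis Θ N t e) {j : ℕ} (hj : j + 1 < N) {θ : ℝ}
    (hθ : θ ∈ Ioo (t j) (t (j + 1))) (a : ℕ → ℝ) :
    deriv (fun x => ∑ i ∈ Finset.range N, a i * e i x) θ
      = (a (j + 1) - a j) / (t (j + 1) - t j) := by
  have hne : t (j + 1) - t j ≠ 0 := (sub_pos.2 (hB.node_lt_succ j hj)).ne'
  set c := (a (j + 1) - a j) / (t (j + 1) - t j) with hc
  have hlin : HasDerivAt (fun x => a j + c * (x - t j)) c θ := by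
    simpa using (((hasDerivAt_id θ).sub_const (t j)).const_mul c).const_add (a j)
  refine (hlin.congr_of_eventuallyEq ?_).deriv
  filter_upwards [Ioo_mem_nhds hθ.1 hθ.2] with x hx
  rw [hB.sum_mul_eq hj (Ioo_subset_Icc_self hx) a, hc]
  field_simp
  ring

end IsHatBasis

lemma ofReal_setIntegral_sq_mul {s : Set ℝ} {g : ℝ → ℝ} (hg : IntegrableOn (fun x => g x ^ 2) s)
    {c : ℝ} (hc : 0 ≤ c) :
    ENNReal.ofReal ((∫ x in s, g x ^ 2) * c) = ∫⁻ x in s, ENNReal.ofReal (g x ^ 2 * c) := by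
  rw [← integral_mul_const]
  exact ofReal_integral_eq_lintegral_ofReal (hg.mul_const c)
    (ae_of_all _ fun _ => mul_nonneg (sq_nonneg _) hc)

lemma wL2r_congr {Θ : ℝ} {v v' : ℝ × ℝ → ℝ}
    (h : ∀ r ∈ Ioo (0:ℝ) 1, ∀ θ ∈ Ioo 0 Θ, v (r, θ) = v' (r, θ)) : wL2r Θ v = wL2r Θ v' :=
  setLIntegral_congr_fun measurableSet_Ioo fun r hr =>
    setLIntegral_congr_fun measurableSet_Ioo fun θ hθ => by simp only [h r hr θ hθ]

lemma wL2r_le_wL2invr (Θ : ℝ) (v : ℝ × ℝ → ℝ) : wL2r Θ v ≤ wL2invr Θ v :=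
  setLIntegral_mono' measurableSet_Ioo fun r hr => lintegral_mono fun θ => by
    refine ENNReal.ofReal_le_ofReal ?_
    rw [div_eq_mul_inv]
    exact mul_le_mul_of_nonneg_left (le_inv_of_le_inv₀ hr.1 (by
      rw [inv_eq_one_div, le_div_iff₀ hr.1]; nlinarith [hr.1, hr.2])) (sq_nonneg _)

lemma aemeasurable_lintegral_sq_mul {Θ : ℝ} {v : ℝ × ℝ → ℝ}
    (hv : ContinuousOn v (Ioo 0 1 ×ˢ Icc 0 Θ)) :
    AEMeasurable (fun r => ∫⁻ θ in Ioo 0 Θ, ENNReal.ofReal (v (r, θ) ^ 2 * r))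
      (volume.restrict (Ioo 0 1)) := by
  classical
  -- `v` is arbitrary off the rectangle: cut it off there to get a jointly measurable integrand
  set U : Set (ℝ × ℝ) := Ioo 0 1 ×ˢ Ioo 0 Θ
  have hG : Measurable (U.piecewise (fun p => ENNReal.ofReal (v p ^ 2 * p.1)) 0) :=
    ContinuousOn.measurable_piecewise
      (ENNReal.continuous_ofReal.comp_continuousOn
        (((hv.mono (prod_mono le_rfl Ioo_subset_Icc_self)).pow 2).mul continuous_fst.continuousOn))
      continuousOn_const (measurableSet_Ioo.prod measurableSet_Ioo)
  refine (hG.lintegral_prod_right' (ν := volume.restrict (Ioo 0 Θ))).aemeasurable.congr ?_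
  filter_upwards [ae_restrict_mem measurableSet_Ioo] with r hr
  exact setLIntegral_congr_fun measurableSet_Ioo fun θ hθ => by simp [U, piecewise, hr, hθ]

/-- Open in `r`, because `pd1 u` is a junk `deriv` on the edges `r = 0, 1`. -/
structure HasAngularDeriv (Θ : ℝ) (v w : ℝ × ℝ → ℝ) : Prop where
  continuousOn : ContinuousOn v (Ioo 0 1 ×ˢ Icc 0 Θ)
  continuousOn_deriv : ContinuousOn w (Ioo 0 1 ×ˢ Icc 0 Θ)
  hasDerivAt : ∀ r ∈ Ioo (0:ℝ) 1, ∀ θ ∈ Ioo 0 Θ, HasDerivAt (fun θ => v (r, θ)) (w (r, θ)) θ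

namespace HasAngularDeriv

variable {Θ r : ℝ} {v w : ℝ × ℝ → ℝ}

lemma continuousOn_slice (hv : HasAngularDeriv Θ v w) (hr : r ∈ Ioo 0 1) :
    ContinuousOn (fun θ => v (r, θ)) (Icc 0 Θ) :=
  hv.continuousOn.uncurry_left (f := fun r θ => v (r, θ)) r hr

lemma integrableOn_sq_deriv_slice (hv : HasAngularDeriv Θ v w) (hr : r ∈ Ioo 0 1) :
    IntegrableOn (fun θ => w (r, θ) ^ 2) (Ioo 0 Θ) :=
  ((hv.continuousOn_deriv.uncurry_left (f := fun r θ => w (r, θ)) r hr).pow 2).integrableOn_Icc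
    |>.mono_set Ioo_subset_Icc_self

lemma pd2_eq (hv : HasAngularDeriv Θ v w) {θ : ℝ} (hr : r ∈ Ioo 0 1) (hθ : θ ∈ Ioo 0 Θ) :
    pd2 v (r, θ) = w (r, θ) :=
  (hv.hasDerivAt r hr θ hθ).deriv

lemma ofReal_setIntegral_sq_deriv_mul (hv : HasAngularDeriv Θ v w) (hr : r ∈ Ioo 0 1) {c : ℝ}
    (hc : 0 ≤ c) :
    ENNReal.ofReal ((∫ θ in Ioo 0 Θ, w (r, θ) ^ 2) * c)
      = ∫⁻ θ in Ioo 0 Θ, ENNReal.ofReal (pd2 v (r, θ) ^ 2 * c) := by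
  rw [ofReal_setIntegral_sq_mul (hv.integrableOn_sq_deriv_slice hr) hc]
  exact setLIntegral_congr_fun measurableSet_Ioo fun θ hθ => by rw [hv.pd2_eq hr hθ]

end HasAngularDeriv

section Interpolant

variable {Θ : ℝ} {N : ℕ} {t : ℕ → ℝ} {e : ℕ → ℝ → ℝ} {v w : ℝ × ℝ → ℝ}

lemma pd1_interp {u : ℝ × ℝ → ℝ} {r θ : ℝ}
    (hu : ∀ i < N, DifferentiableAt ℝ (fun s => u (s, t i)) r) :
    pd1 (interp N t e u) (r, θ) = interp N t e (pd1 u) (r, θ) :=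
  (HasDerivAt.fun_sum fun i hi =>
    ((hu i (Finset.mem_range.1 hi)).hasDerivAt.mul_const (e i θ))).deriv

lemma wL2r_interp_le (hB : IsHatBasis Θ N t e) (hv : HasAngularDeriv Θ v w) :
    wL2r Θ (interp N t e v) ≤ ENNReal.ofReal (2 * (1 + Θ)) * (wL2r Θ v + wL2r Θ (pd2 v)) := by
  have hΘ := hB.pos
  have hslice : ∀ r ∈ Ioo (0:ℝ) 1,
      ∫⁻ θ in Ioo 0 Θ, ENNReal.ofReal (interp N t e v (r, θ) ^ 2 * r)
        ≤ ENNReal.ofReal (2 * (1 + Θ)) * ((∫⁻ θ in Ioo 0 Θ, ENNReal.ofReal (v (r, θ) ^ 2 * r))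
          + ∫⁻ θ in Ioo 0 Θ, ENNReal.ofReal (pd2 v (r, θ) ^ 2 * r)) := by
    intro r hr
    set I := ∫ θ in Ioo 0 Θ, v (r, θ) ^ 2
    set J := ∫ θ in Ioo 0 Θ, w (r, θ) ^ 2
    have hI : 0 ≤ I := setIntegral_nonneg measurableSet_Ioo fun _ _ => sq_nonneg _
    have hJ : 0 ≤ J := setIntegral_nonneg measurableSet_Ioo fun _ _ => sq_nonneg _
    have hpt : ∀ᵐ θ ∂volume.restrict (Ioo 0 Θ), ENNReal.ofReal (interp N t e v (r, θ) ^ 2 * r)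
        ≤ ENNReal.ofReal (2 * (1 / Θ + 1) * (I + J) * r) := by
      filter_upwards [hB.ae_exists_mem_Ioo] with θ ⟨j, hj, hθ⟩
      exact ENNReal.ofReal_le_ofReal <| mul_le_mul_of_nonneg_right
        (hB.sq_sum_mul_le (hv.continuousOn_slice hr) (hv.hasDerivAt r hr)
          (hv.integrableOn_sq_deriv_slice hr) hj (Ioo_subset_Icc_self hθ)) hr.1.le
    calc _ ≤ ENNReal.ofReal (2 * (1 / Θ + 1) * (I + J) * r) * volume (Ioo (0:ℝ) Θ) :=
          (lintegral_mono_ae hpt).trans_eq (setLIntegral_const _ _)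
      _ = ENNReal.ofReal (2 * (1 + Θ)) * (ENNReal.ofReal (I * r) + ENNReal.ofReal (J * r)) := by
          rw [volume_Ioo, sub_zero,
            ← ENNReal.ofReal_mul (mul_nonneg (by positivity) hr.1.le),
            ← ENNReal.ofReal_add (mul_nonneg hI hr.1.le) (mul_nonneg hJ hr.1.le),
            ← ENNReal.ofReal_mul (by positivity)]
          congr 1
          field_simp
      _ = _ := by
          rw [ofReal_setIntegral_sq_mul ((hv.continuousOn_slice hr).pow 2 |>.integrableOn_Icc
            |>.mono_set Ioo_subset_Icc_self) hr.1.le,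
            hv.ofReal_setIntegral_sq_deriv_mul hr hr.1.le]
  calc wL2r Θ (interp N t e v)
      ≤ ∫⁻ r in Ioo 0 1, ENNReal.ofReal (2 * (1 + Θ))
          * ((∫⁻ θ in Ioo 0 Θ, ENNReal.ofReal (v (r, θ) ^ 2 * r))
            + ∫⁻ θ in Ioo 0 Θ, ENNReal.ofReal (pd2 v (r, θ) ^ 2 * r)) :=
        setLIntegral_mono' measurableSet_Ioo hslice
    _ = _ := by
        rw [lintegral_const_mul' _ _ ENNReal.ofReal_ne_top,
          lintegral_add_left' (aemeasurable_lintegral_sq_mul hv.continuousOn)]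
        rfl

lemma wL2invr_pd2_interp_le (hB : IsHatBasis Θ N t e) (hv : HasAngularDeriv Θ v w) {h : ℝ}
    (hh : 0 < h) (hgap : ∀ j, j + 1 < N → h ≤ t (j + 1) - t j) :
    wL2invr Θ (pd2 (interp N t e v)) ≤ ENNReal.ofReal (Θ / h) * wL2invr Θ (pd2 v) := by
  have hslice : ∀ r ∈ Ioo (0:ℝ) 1,
      ∫⁻ θ in Ioo 0 Θ, ENNReal.ofReal (pd2 (interp N t e v) (r, θ) ^ 2 / r)
        ≤ ENNReal.ofReal (Θ / h) * ∫⁻ θ in Ioo 0 Θ, ENNReal.ofReal (pd2 v (r, θ) ^ 2 / r) := by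
    intro r hr
    set J := ∫ θ in Ioo 0 Θ, w (r, θ) ^ 2
    have hJ : 0 ≤ J := setIntegral_nonneg measurableSet_Ioo fun _ _ => sq_nonneg _
    have hpt : ∀ᵐ θ ∂volume.restrict (Ioo 0 Θ),
        ENNReal.ofReal (pd2 (interp N t e v) (r, θ) ^ 2 / r) ≤ ENNReal.ofReal (J / h / r) := by
      filter_upwards [hB.ae_exists_mem_Ioo] with θ ⟨j, hj, hθ⟩
      have hslope := sq_slope_le (hv.continuousOn_slice hr) (hv.hasDerivAt r hr)
        (hv.integrableOn_sq_deriv_slice hr) (hB.node_mem_Icc (i := j) (by omega)).1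
        (hB.node_lt_succ j hj) (hB.node_mem_Icc hj).2
      refine ENNReal.ofReal_le_ofReal (div_le_div_of_nonneg_right ?_ hr.1.le)
      rw [show pd2 (interp N t e v) (r, θ) = _ from hB.deriv_sum_mul_eq hj hθ fun i => v (r, t i)]
      exact hslope.trans (div_le_div_of_nonneg_left hJ hh (hgap j hj))
    calc _ ≤ ENNReal.ofReal (J / h / r) * volume (Ioo (0:ℝ) Θ) :=
          (lintegral_mono_ae hpt).trans_eq (setLIntegral_const _ _)
      _ = ENNReal.ofReal (Θ / h) * ENNReal.ofReal (J * r⁻¹) := by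
          rw [volume_Ioo, sub_zero,
            ← ENNReal.ofReal_mul (div_nonneg (div_nonneg hJ hh.le) hr.1.le),
            ← ENNReal.ofReal_mul (div_nonneg hB.pos.le hh.le)]
          congr 1
          ring
      _ = _ := by
          simp_rw [div_eq_mul_inv _ r]
          rw [hv.ofReal_setIntegral_sq_deriv_mul hr (inv_nonneg.2 hr.1.le)]
  calc wL2invr Θ (pd2 (interp N t e v))
      ≤ ∫⁻ r in Ioo 0 1, ENNReal.ofReal (Θ / h)
          * ∫⁻ θ in Ioo 0 Θ, ENNReal.ofReal (pd2 v (r, θ) ^ 2 / r) :=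
        setLIntegral_mono' measurableSet_Ioo hslice
    _ = _ := lintegral_const_mul' _ _ ENNReal.ofReal_ne_top

end Interpolant

section Slices

open Topology

variable {E : Type*} [NormedAddCommGroup E] [NormedSpace ℝ E] {g : ℝ × ℝ → E} {A B : Set ℝ}
  {r θ : ℝ}

lemma DifferentiableWithinAt.hasDerivAt_slice_fst (hg : DifferentiableWithinAt ℝ g (A ×ˢ B) (r, θ))
    (hA : A ∈ 𝓝 r) (hθ : θ ∈ B) :
    HasDerivAt (fun s => g (s, θ)) (fderivWithin ℝ g (A ×ˢ B) (r, θ) (1, 0)) r :=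
  (hg.hasFDerivWithinAt.comp_hasDerivWithinAt r
    ((hasDerivAt_id' r).prodMk (hasDerivAt_const r θ)).hasDerivWithinAt
    fun _ hs => mk_mem_prod hs hθ).hasDerivAt hA

lemma DifferentiableWithinAt.hasDerivAt_slice_snd (hg : DifferentiableWithinAt ℝ g (A ×ˢ B) (r, θ))
    (hr : r ∈ A) (hB : B ∈ 𝓝 θ) :
    HasDerivAt (fun s => g (r, s)) (fderivWithin ℝ g (A ×ˢ B) (r, θ) (0, 1)) θ :=
  (hg.hasFDerivWithinAt.comp_hasDerivWithinAt θ
    ((hasDerivAt_const θ r).prodMk (hasDerivAt_id' θ)).hasDerivWithinAt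
    fun _ hs => mk_mem_prod hr hs).hasDerivAt hB

end Slices

namespace ContDiffOn

variable {Θ : ℝ} {u : ℝ × ℝ → ℝ}

lemma hasDerivAt_fst (hu : ContDiffOn ℝ 2 u (Icc 0 1 ×ˢ Icc 0 Θ)) {r θ : ℝ} (hr : r ∈ Ioo 0 1)
    (hθ : θ ∈ Icc 0 Θ) :
    HasDerivAt (fun s => u (s, θ)) (fderivWithin ℝ u (Icc 0 1 ×ˢ Icc 0 Θ) (r, θ) (1, 0)) r :=
  (hu.differentiableOn (by norm_num) (r, θ) ⟨Ioo_subset_Icc_self hr, hθ⟩).hasDerivAt_slice_fst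
    (Icc_mem_nhds hr.1 hr.2) hθ

lemma hasAngularDeriv (hΘ : 0 < Θ) (hu : ContDiffOn ℝ 2 u (Icc 0 1 ×ˢ Icc 0 Θ)) :
    HasAngularDeriv Θ u fun p => fderivWithin ℝ u (Icc 0 1 ×ˢ Icc 0 Θ) p (0, 1) where
  continuousOn := hu.continuousOn.mono (prod_mono Ioo_subset_Icc_self le_rfl)
  continuousOn_deriv :=
    ((hu.continuousOn_fderivWithin ((uniqueDiffOn_Icc one_pos).prod (uniqueDiffOn_Icc hΘ))
      (by norm_num)).clm_apply continuousOn_const).mono (prod_mono Ioo_subset_Icc_self le_rfl)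
  hasDerivAt r hr θ hθ :=
    (hu.differentiableOn (by norm_num) (r, θ) ⟨Ioo_subset_Icc_self hr, Ioo_subset_Icc_self hθ⟩)
      |>.hasDerivAt_slice_snd (Ioo_subset_Icc_self hr) (Icc_mem_nhds hθ.1 hθ.2)

lemma hasAngularDeriv_pd1 (hΘ : 0 < Θ) (hu : ContDiffOn ℝ 2 u (Icc 0 1 ×ˢ Icc 0 Θ)) :
    HasAngularDeriv Θ (pd1 u) fun p => fderivWithin ℝ (fderivWithin ℝ u (Icc 0 1 ×ˢ Icc 0 Θ))
      (Icc 0 1 ×ˢ Icc 0 Θ) p (0, 1) (1, 0) := by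
  set S := Icc (0:ℝ) 1 ×ˢ Icc 0 Θ
  have hS : UniqueDiffOn ℝ S := (uniqueDiffOn_Icc one_pos).prod (uniqueDiffOn_Icc hΘ)
  have hDu : ContDiffOn ℝ 1 (fderivWithin ℝ u S) S := hu.fderivWithin hS (by norm_num)
  have hpd1 : ∀ p ∈ Ioo 0 1 ×ˢ Icc 0 Θ, pd1 u p = fderivWithin ℝ u S p (1, 0) :=
    fun p hp => (hu.hasDerivAt_fst hp.1 hp.2).deriv
  refine ⟨?_, ?_, fun r hr θ hθ => ?_⟩
  · exact ((hDu.continuousOn.clm_apply continuousOn_const).mono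
      (prod_mono Ioo_subset_Icc_self le_rfl)).congr hpd1
  · exact (((hDu.continuousOn_fderivWithin hS le_rfl).clm_apply continuousOn_const).clm_apply
      continuousOn_const).mono (prod_mono Ioo_subset_Icc_self le_rfl)
  · have h := (hDu.differentiableOn one_ne_zero (r, θ)
      ⟨Ioo_subset_Icc_self hr, Ioo_subset_Icc_self hθ⟩).hasDerivAt_slice_snd
        (Ioo_subset_Icc_self hr) (Icc_mem_nhds hθ.1 hθ.2)
    refine ((ContinuousLinearMap.apply ℝ ℝ ((1:ℝ), (0:ℝ))).hasFDerivAt.comp_hasDerivAt θ h)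
      |>.congr_of_eventuallyEq ?_
    filter_upwards [Icc_mem_nhds hθ.1 hθ.2] with x hx
    exact hpd1 (r, x) ⟨hr, hx⟩

end ContDiffOn

theorem stmt5_general (Θ : ℝ) (hΘ₀ : 0 < Θ)
    (N : ℕ) (hN : 2 ≤ N) (t : ℕ → ℝ) (e : ℕ → ℝ → ℝ)
    (ht0 : t 0 = 0) (htN : t (N - 1) = Θ)
    (htmono : ∀ j, j + 1 < N → t j < t (j + 1))
    (hnode : ∀ i < N, ∀ j < N, e i (t j) = if i = j then 1 else 0)
    (hlin : ∀ i < N, ∀ j, j + 1 < N → ∀ x ∈ Icc (t j) (t (j + 1)),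
      e i x = e i (t j) + (e i (t (j + 1)) - e i (t j)) * (x - t j) / (t (j + 1) - t j)) :
    ∃ C > (0:ℝ), ∀ u : ℝ × ℝ → ℝ,
      ContDiffOn ℝ 2 u (Icc (0:ℝ) 1 ×ˢ Icc (0:ℝ) Θ) →
      wL2r Θ (interp N t e u) + wL2r Θ (pd1 (interp N t e u))
          + wL2invr Θ (pd2 (interp N t e u))
        ≤ ENNReal.ofReal C *
          (wL2r Θ u + wL2r Θ (pd1 u) + wL2invr Θ (pd2 u) + wL2r Θ (pd2 (pd1 u))) := by
  have hB : IsHatBasis Θ N t e := ⟨hN, ht0, htN, htmono, hnode, hlin⟩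
  obtain ⟨h, hh, hgap⟩ := hB.exists_pos_le_gap
  refine ⟨2 * (1 + Θ) + Θ / h, by positivity, fun u hu => ?_⟩
  have hu₀ := hu.hasAngularDeriv hΘ₀
  have hpd1 : wL2r Θ (pd1 (interp N t e u)) = wL2r Θ (interp N t e (pd1 u)) :=
    wL2r_congr fun r hr _ _ => pd1_interp fun i hi =>
      (hu.hasDerivAt_fst hr (hB.node_mem_Icc hi)).differentiableAt
  set c := ENNReal.ofReal (2 * (1 + Θ))
  set R := wL2r Θ u + wL2r Θ (pd1 u) + wL2invr Θ (pd2 u) + wL2r Θ (pd2 (pd1 u))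
  calc _ ≤ c * (wL2r Θ u + wL2invr Θ (pd2 u)) + c * (wL2r Θ (pd1 u) + wL2r Θ (pd2 (pd1 u)))
        + ENNReal.ofReal (Θ / h) * wL2invr Θ (pd2 u) := by
        gcongr
        · exact (wL2r_interp_le hB hu₀).trans (by gcongr; exact wL2r_le_wL2invr _ _)
        · exact hpd1 ▸ wL2r_interp_le hB (hu.hasAngularDeriv_pd1 hΘ₀)
        · exact wL2invr_pd2_interp_le hB hu₀ hh hgap
    _ ≤ c * R + ENNReal.ofReal (Θ / h) * R := by
        rw [← mul_add]
        gcongr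
        · exact le_of_eq (by ring)
        · exact le_add_right le_add_self
    _ = ENNReal.ofReal (2 * (1 + Θ) + Θ / h) * R := by
        rw [ENNReal.ofReal_add (by positivity) (by positivity), add_mul]

/-- Stability of the interpolation operator: there is `C > 0`,
depending only on `Θ`, `N` and the partition, such that for every `u` twice
continuously differentiable on `[0,1] × [0,Θ]`,
`‖Πu‖²_{L²_r} + ‖∂_r Πu‖²_{L²_r} + ‖∂_θ Πu‖²_{L²_{1/r}}
  ≤ C (‖u‖²_{L²_r} + ‖∂_r u‖²_{L²_r} + ‖∂_θ u‖²_{L²_{1/r}} + ‖∂_{rθ} u‖²_{L²_r})`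
in `[0,∞]`. -/
theorem stmt5 (Θ : ℝ) (hΘ₀ : 0 < Θ) (hΘ₂ : Θ < 2 * π)
    (N : ℕ) (hN : 2 ≤ N) (t : ℕ → ℝ) (e : ℕ → ℝ → ℝ)
    (ht0 : t 0 = 0) (htN : t (N - 1) = Θ)
    (htmono : ∀ j, j + 1 < N → t j < t (j + 1))
    (hnode : ∀ i < N, ∀ j < N, e i (t j) = if i = j then 1 else 0)
    (hlin : ∀ i < N, ∀ j, j + 1 < N → ∀ x ∈ Icc (t j) (t (j + 1)),
      e i x = e i (t j) + (e i (t (j + 1)) - e i (t j)) * (x - t j) / (t (j + 1) - t j)) :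
    ∃ C > (0:ℝ), ∀ u : ℝ × ℝ → ℝ,
      ContDiffOn ℝ 2 u (Icc (0:ℝ) 1 ×ˢ Icc (0:ℝ) Θ) →
      wL2r Θ (interp N t e u) + wL2r Θ (pd1 (interp N t e u))
          + wL2invr Θ (pd2 (interp N t e u))
        ≤ ENNReal.ofReal C *
          (wL2r Θ u + wL2r Θ (pd1 u) + wL2invr Θ (pd2 u) + wL2r Θ (pd2 (pd1 u))) :=
  stmt5_general Θ hΘ₀ N hN t e ht0 htN htmono hnode hlin
end

section
/- For every continuously differentiable function u on [0,1] × [0,Θ], the piecewise linear interpolant Πu satisfies the stability bound ‖∂_θ Πu‖²_{L²_{1/r}(Q)} ≤ ‖∂_θ u‖²_{L²_{1/r}(Q)}, where ∂_θ Πu is the (piecewise constant in θ) derivative Σ_{i=1}^N u(r,θ_i) e_i′(θ) defined for θ outside the partition nodes, and the inequality holds in [0,∞]. -/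
/-!
On a cell `(θⱼ, θⱼ₊₁)` of the partition, `∂_θ Πu (r, ·)` is the constant difference quotient of
`u (r, ·)`, which by the fundamental theorem of calculus is the mean of `∂_θ u (r, ·)` over the
cell. The square of a mean is at most the mean of the square (Cauchy–Schwarz), so the bound holds
cell by cell; the nodes are null, and the weight `1 / r` does not depend on `θ`.
-/

open MeasureTheory Set Real

theorem sq_mul_le_intervalIntegral_sq {g : ℝ → ℝ} {a b c : ℝ} (hab : a ≤ b)
    (hg : ContinuousOn g (Icc a b)) (hmean : ∫ x in a..b, g x = c * (b - a)) :
    c ^ 2 * (b - a) ≤ ∫ x in a..b, g x ^ 2 := by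
  have hg' : ContinuousOn g (uIcc a b) := by rwa [uIcc_of_le hab]
  have hg1 : IntervalIntegrable g volume a b := hg'.intervalIntegrable
  have hg2 : IntervalIntegrable (fun x => g x ^ 2) volume a b := (hg'.pow 2).intervalIntegrable
  have hvar : ∫ x in a..b, (g x - c) ^ 2
      = (∫ x in a..b, g x ^ 2) - 2 * c * (∫ x in a..b, g x) + c ^ 2 * (b - a) := by
    simp_rw [sub_sq]
    rw [intervalIntegral.integral_add (hg2.sub ((hg1.const_mul _).mul_const _))
        intervalIntegrable_const,
      intervalIntegral.integral_sub hg2 ((hg1.const_mul _).mul_const _),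
      intervalIntegral.integral_mul_const, intervalIntegral.integral_const_mul,
      intervalIntegral.integral_const, smul_eq_mul]
    ring
  have hnonneg : 0 ≤ ∫ x in a..b, (g x - c) ^ 2 :=
    intervalIntegral.integral_nonneg hab fun x _ => sq_nonneg _
  rw [hvar, hmean] at hnonneg
  nlinarith

theorem sq_slope_mul_le_setIntegral_sq_deriv {f : ℝ → ℝ} {a b : ℝ} (hab : a < b)
    (hf : ContDiffOn ℝ 1 f (Icc a b)) :
    slope f a b ^ 2 * (b - a) ≤ ∫ x in Ioo a b, deriv f x ^ 2 := by
  set g := derivWithin f (Icc a b)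
  have hg : ContinuousOn g (Icc a b) :=
    hf.continuousOn_derivWithin (uniqueDiffOn_Icc hab) le_rfl
  have hderiv : ∀ x ∈ Ioo a b, HasDerivAt f (g x) x := fun x hx =>
    ((hf.differentiableOn one_ne_zero x (Ioo_subset_Icc_self hx)).hasDerivWithinAt).hasDerivAt
      (Icc_mem_nhds hx.1 hx.2)
  have hftc : ∫ x in a..b, g x = slope f a b * (b - a) := by
    rw [intervalIntegral.integral_eq_sub_of_hasDerivAt_of_le hab.le hf.continuousOn hderiv
      (hg.intervalIntegrable_of_Icc hab.le), slope_def_field,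
      div_mul_cancel₀ _ (sub_ne_zero.2 hab.ne')]
  have hsq : ∫ x in Ioo a b, deriv f x ^ 2 = ∫ x in a..b, g x ^ 2 := by
    rw [intervalIntegral.integral_of_le hab.le, integral_Ioc_eq_integral_Ioo]
    exact setIntegral_congr_fun measurableSet_Ioo fun x hx => by rw [(hderiv x hx).deriv]
  rw [hsq]
  exact sq_mul_le_intervalIntegral_sq hab.le hg hftc

theorem setLIntegral_sq_le_of_eq_slope {f φ : ℝ → ℝ} {a b : ℝ} (hab : a < b)
    (hf : ContDiffOn ℝ 1 f (Icc a b)) (hφ : ∀ x ∈ Ioo a b, φ x = slope f a b) :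
    ∫⁻ x in Ioo a b, ENNReal.ofReal (φ x ^ 2) ≤ ∫⁻ x in Ioo a b, ENNReal.ofReal (deriv f x ^ 2) :=
  calc ∫⁻ x in Ioo a b, ENNReal.ofReal (φ x ^ 2)
      = ENNReal.ofReal (slope f a b ^ 2 * (b - a)) := by
        rw [setLIntegral_congr_fun measurableSet_Ioo fun x hx => by rw [hφ x hx],
          setLIntegral_const, Real.volume_Ioo, ENNReal.ofReal_mul (sq_nonneg _)]
    _ ≤ ENNReal.ofReal (∫ x in Ioo a b, deriv f x ^ 2) :=
        ENNReal.ofReal_le_ofReal (sq_slope_mul_le_setIntegral_sq_deriv hab hf)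
    _ = ‖∫ x in Ioo a b, deriv f x ^ 2‖ₑ :=
        (Real.enorm_of_nonneg (setIntegral_nonneg measurableSet_Ioo fun _ _ => sq_nonneg _)).symm
    _ ≤ ∫⁻ x in Ioo a b, ‖deriv f x ^ 2‖ₑ := enorm_integral_le_lintegral_enorm _
    _ = ∫⁻ x in Ioo a b, ENNReal.ofReal (deriv f x ^ 2) := by
        simp_rw [Real.enorm_of_nonneg (sq_nonneg _)]

theorem setLIntegral_Ioc_eq_sum {t : ℕ → ℝ} {n : ℕ} (ht : MonotoneOn t (Iic n))
    (g : ℝ → ENNReal) :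
    ∫⁻ x in Ioc (t 0) (t n), g x = ∑ j ∈ Finset.range n, ∫⁻ x in Ioc (t j) (t (j + 1)), g x := by
  induction n with
  | zero => simp
  | succ n ih =>
    have hn : t n ≤ t (n + 1) := ht (by simp) (by simp) n.le_succ
    have h0 : t 0 ≤ t n := ht (by simp) (by simp) n.zero_le
    rw [Finset.sum_range_succ, ← ih (ht.mono (Iic_subset_Iic.2 n.le_succ)),
      ← lintegral_union measurableSet_Ioc (Ioc_disjoint_Ioc_of_le le_rfl),
      Ioc_union_Ioc_eq_Ioc h0 hn]

theorem setLIntegral_sq_le_of_eq_slope_on_partition {f φ : ℝ → ℝ} {t : ℕ → ℝ} {n : ℕ}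
    (ht : StrictMonoOn t (Iic n)) (hf : ContDiffOn ℝ 1 f (Icc (t 0) (t n)))
    (hφ : ∀ j < n, ∀ x ∈ Ioo (t j) (t (j + 1)), φ x = slope f (t j) (t (j + 1))) :
    ∫⁻ x in Ioc (t 0) (t n), ENNReal.ofReal (φ x ^ 2)
      ≤ ∫⁻ x in Ioc (t 0) (t n), ENNReal.ofReal (deriv f x ^ 2) := by
  rw [setLIntegral_Ioc_eq_sum ht.monotoneOn, setLIntegral_Ioc_eq_sum ht.monotoneOn]
  refine Finset.sum_le_sum fun j hj => ?_
  have hj : j < n := Finset.mem_range.1 hj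
  simp_rw [setLIntegral_congr (Ioo_ae_eq_Ioc (a := t j) (b := t (j + 1))).symm]
  refine setLIntegral_sq_le_of_eq_slope (ht hj.le hj j.lt_succ_self)
    (hf.mono (Icc_subset_Icc ?_ ?_)) (hφ j hj)
  · exact ht.monotoneOn n.zero_le hj.le j.zero_le
  · exact ht.monotoneOn hj (mem_Iic.2 le_rfl) hj

theorem deriv_eq_slope_of_affine_on_Icc {f : ℝ → ℝ} {a b : ℝ}
    (hf : ∀ x ∈ Icc a b, f x = f a + (f b - f a) * (x - a) / (b - a))
    {x : ℝ} (hx : x ∈ Ioo a b) : deriv f x = slope f a b := by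
  have heq : f =ᶠ[nhds x] fun y => f a + (f b - f a) * (y - a) / (b - a) :=
    Filter.eventually_of_mem (Ioo_mem_nhds hx.1 hx.2) fun y hy => hf y (Ioo_subset_Icc_self hy)
  rw [heq.deriv_eq, slope_def_field]
  simp

theorem sum_mul_deriv_hat_eq_slope {N : ℕ} {t : ℕ → ℝ} {e : ℕ → ℝ → ℝ}
    (hnode : ∀ i < N, ∀ j < N, e i (t j) = if i = j then 1 else 0)
    (hlin : ∀ i < N, ∀ j, j + 1 < N → ∀ x ∈ Icc (t j) (t (j + 1)),
      e i x = e i (t j) + (e i (t (j + 1)) - e i (t j)) * (x - t j) / (t (j + 1) - t j))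
    (f : ℝ → ℝ) {j : ℕ} (hj : j + 1 < N) {θ : ℝ} (hθ : θ ∈ Ioo (t j) (t (j + 1))) :
    ∑ i ∈ Finset.range N, f (t i) * deriv (e i) θ = slope f (t j) (t (j + 1)) := by
  have hnodal : ∀ k < N, ∑ i ∈ Finset.range N, f (t i) * e i (t k) = f (t k) := fun k hk => by
    rw [Finset.sum_eq_single k
      (fun i hi hik => by rw [hnode i (Finset.mem_range.1 hi) k hk, if_neg hik, mul_zero])
      (fun hk' => absurd (Finset.mem_range.2 hk) hk'), hnode k hk k hk, if_pos rfl, mul_one]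
  rw [Finset.sum_congr rfl fun i hi => by
    rw [deriv_eq_slope_of_affine_on_Icc (hlin i (Finset.mem_range.1 hi) j hj) hθ]]
  simp_rw [slope_def_field, mul_div_assoc', mul_sub, ← Finset.sum_div, Finset.sum_sub_distrib,
    hnodal (j + 1) hj, hnodal j (by omega)]

theorem stmt6_general (Θ : ℝ) (N : ℕ) (t : ℕ → ℝ) (e : ℕ → ℝ → ℝ)
    (ht0 : t 0 = 0) (htN : t (N - 1) = Θ)
    (htmono : ∀ j, j + 1 < N → t j < t (j + 1))
    (hnode : ∀ i < N, ∀ j < N, e i (t j) = if i = j then 1 else 0)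
    (hlin : ∀ i < N, ∀ j, j + 1 < N → ∀ x ∈ Icc (t j) (t (j + 1)),
      e i x = e i (t j) + (e i (t (j + 1)) - e i (t j)) * (x - t j) / (t (j + 1) - t j))
    (u : ℝ × ℝ → ℝ) (hu : ContDiffOn ℝ 1 u (Icc (0:ℝ) 1 ×ˢ Icc (0:ℝ) Θ))
    (dPiu : ℝ × ℝ → ℝ)
    (hdPiu : ∀ p, dPiu p = ∑ i ∈ Finset.range N, u (p.1, t i) * deriv (e i) p.2) :
    wL2invr Θ dPiu ≤ wL2invr Θ (pd2 u) := by
  refine setLIntegral_mono' measurableSet_Ioo fun r hr => ?_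
  have ht : StrictMonoOn t (Iic (N - 1)) :=
    strictMonoOn_of_lt_add_one ordConnected_Iic fun j _ _ hj => htmono j (by grind)
  have hf : ContDiffOn ℝ 1 (fun s => u (r, s)) (Icc (t 0) (t (N - 1))) := by
    rw [ht0, htN]
    exact hu.comp (contDiff_const.prodMk contDiff_id).contDiffOn
      fun s hs => ⟨Ioo_subset_Icc_self hr, hs⟩
  have key := setLIntegral_sq_le_of_eq_slope_on_partition ht hf (φ := fun θ => dPiu (r, θ))
    fun j hj θ hθ => by
      rw [hdPiu]
      exact sum_mul_deriv_hat_eq_slope hnode hlin (fun s => u (r, s)) (by omega) hθ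
  rw [ht0, htN] at key
  simp_rw [div_eq_mul_inv, ENNReal.ofReal_mul (sq_nonneg _)]
  rw [lintegral_mul_const' _ _ ENNReal.ofReal_ne_top,
    lintegral_mul_const' _ _ ENNReal.ofReal_ne_top, setLIntegral_congr Ioo_ae_eq_Ioc,
    setLIntegral_congr Ioo_ae_eq_Ioc]
  exact mul_le_mul_left key _

/-- Stability of the interpolant in the angular seminorm: for `u`
continuously differentiable on `[0,1] × [0,Θ]`,
`‖∂_θ Πu‖²_{L²_{1/r}(Q)} ≤ ‖∂_θ u‖²_{L²_{1/r}(Q)}` in `[0,∞]`, where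
`∂_θ Πu (r,θ) = Σ_i u(r,θ_i) e_i′(θ)` is defined for `θ` outside the partition nodes. -/
theorem stmt6 (Θ : ℝ) (hΘ₀ : 0 < Θ) (hΘ₂ : Θ < 2 * π)
    (N : ℕ) (hN : 2 ≤ N) (t : ℕ → ℝ) (e : ℕ → ℝ → ℝ)
    (ht0 : t 0 = 0) (htN : t (N - 1) = Θ)
    (htmono : ∀ j, j + 1 < N → t j < t (j + 1))
    (hnode : ∀ i < N, ∀ j < N, e i (t j) = if i = j then 1 else 0)
    (hlin : ∀ i < N, ∀ j, j + 1 < N → ∀ x ∈ Icc (t j) (t (j + 1)),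
      e i x = e i (t j) + (e i (t (j + 1)) - e i (t j)) * (x - t j) / (t (j + 1) - t j))
    (u : ℝ × ℝ → ℝ) (hu : ContDiffOn ℝ 1 u (Icc (0:ℝ) 1 ×ˢ Icc (0:ℝ) Θ))
    (dPiu : ℝ × ℝ → ℝ)
    (hdPiu : ∀ p, dPiu p = ∑ i ∈ Finset.range N, u (p.1, t i) * deriv (e i) p.2) :
    wL2invr Θ dPiu ≤ wL2invr Θ (pd2 u) :=
  stmt6_general Θ N t e ht0 htN htmono hnode hlin u hu dPiu hdPiu
end

section
/- For every twice continuously differentiable function u on [0,1] × [0,Θ], the interpolation error satisfies ‖u − Πu‖²_{L²_r(Q)} ≤ h⁴ ‖∂_{θθ} u‖²_{L²_{1/r}(Q)}, where the inequality holds in [0,∞]. -/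
open MeasureTheory Set Real

/-! On each cell `[θ_j, θ_{j+1}]` the interpolant of `θ ↦ u (r, θ)` is its chord, so the error
vanishes at both nodes. Rolle's theorem gives a zero of its derivative; two applications of the
fundamental theorem of calculus and Cauchy–Schwarz then bound the error on the cell by
`(θ_{j+1} - θ_j)⁴ ∫ (∂_θθ u)²`. Summing over the cells, and using `r ≤ 1 / r` for `r ∈ (0,1)`,
gives the weighted estimate. -/

section Interval

open intervalIntegral

/-- Integrate `2 c |q| ≤ q² + c²`, with `c` the mean of `|q|`. -/
lemma sq_intervalIntegral_abs_le {a b : ℝ} (hab : a ≤ b) {q : ℝ → ℝ}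
    (hq : ContinuousOn q (Icc a b)) :
    (∫ x in a..b, |q x|) ^ 2 ≤ (b - a) * ∫ x in a..b, q x ^ 2 := by
  rcases hab.eq_or_lt with rfl | hlt
  · simp
  have hq' : ContinuousOn q (uIcc a b) := by rwa [uIcc_of_le hab]
  have hL : 0 < b - a := sub_pos.2 hlt
  have hq2 : IntervalIntegrable (fun x => q x ^ 2) volume a b := (hq'.pow 2).intervalIntegrable
  set S := ∫ x in a..b, |q x|
  set c := S / (b - a)
  have hamgm : ∫ x in a..b, 2 * c * |q x| ≤ ∫ x in a..b, (q x ^ 2 + c ^ 2) :=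
    integral_mono_on hab (hq'.abs.intervalIntegrable.const_mul _)
      (hq2.add intervalIntegrable_const) fun x _ => by
        nlinarith [sq_nonneg (|q x| - c), sq_abs (q x)]
  rw [intervalIntegral.integral_const_mul,
    intervalIntegral.integral_add hq2 intervalIntegrable_const, intervalIntegral.integral_const,
    smul_eq_mul] at hamgm
  have hS : S ^ 2 / (b - a) = 2 * c * S - (b - a) * c ^ 2 := by
    simp only [c]; field_simp; ring
  have hST : S ^ 2 / (b - a) ≤ ∫ x in a..b, q x ^ 2 := by linarith
  linarith [(div_le_iff₀ hL).1 hST]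

lemma abs_sub_le_integral_abs_deriv {a b x y : ℝ} {f f' : ℝ → ℝ}
    (hf : ContinuousOn f (Icc a b)) (hderiv : ∀ z ∈ Ioo a b, HasDerivAt f (f' z) z)
    (hint : IntervalIntegrable f' volume a b) (hx : x ∈ Icc a b) (hy : y ∈ Icc a b) :
    |f x - f y| ≤ ∫ z in a..b, |f' z| := by
  wlog hyx : y ≤ x generalizing x y
  · rw [abs_sub_comm]; exact this hy hx (le_of_not_ge hyx)
  have hsub : Icc y x ⊆ Icc a b := Icc_subset_Icc hy.1 hx.2
  have hftc : ∫ z in y..x, f' z = f x - f y :=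
    integral_eq_sub_of_hasDerivAt_of_le hyx (hf.mono hsub)
      (fun z hz => hderiv z ⟨hy.1.trans_lt hz.1, hz.2.trans_le hx.2⟩)
      (hint.mono_set (by rwa [uIcc_of_le hyx, uIcc_of_le (hy.1.trans hy.2)]))
  rw [← hftc]
  calc |∫ z in y..x, f' z| ≤ ∫ z in y..x, |f' z| := abs_integral_le_integral_abs hyx
    _ ≤ ∫ z in a..b, |f' z| :=
      integral_mono_interval hy.1 hyx hx.2 (ae_of_all _ fun z => abs_nonneg _) hint.abs

lemma integral_sq_le_of_eq_zero_of_eq_zero {a b : ℝ} (hab : a < b) {f f' f'' : ℝ → ℝ}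
    (hf : ContinuousOn f (Icc a b)) (hf' : ContinuousOn f' (Icc a b))
    (hf'' : ContinuousOn f'' (Icc a b)) (hderiv : ∀ x ∈ Ioo a b, HasDerivAt f (f' x) x)
    (hderiv' : ∀ x ∈ Ioo a b, HasDerivAt f' (f'' x) x) (ha : f a = 0) (hb : f b = 0) :
    ∫ x in a..b, f x ^ 2 ≤ (b - a) ^ 4 * ∫ x in a..b, f'' x ^ 2 := by
  have huIcc : uIcc a b = Icc a b := uIcc_of_le hab.le
  obtain ⟨ξ, hξ, hf'ξ⟩ := exists_hasDerivAt_eq_zero hab hf (ha.trans hb.symm) hderiv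
  set B := ∫ x in a..b, |f'' x|
  have hf'_le : ∀ x ∈ Icc a b, |f' x| ≤ B := fun x hx => by
    simpa [hf'ξ] using abs_sub_le_integral_abs_deriv hf' hderiv'
      (huIcc ▸ hf'').intervalIntegrable hx (Ioo_subset_Icc_self hξ)
  have hf_le : ∀ x ∈ Icc a b, |f x| ≤ (b - a) * B := fun x hx =>
    calc |f x| = |f x - f a| := by rw [ha, sub_zero]
      _ ≤ ∫ z in a..b, |f' z| := abs_sub_le_integral_abs_deriv hf hderiv
          (huIcc ▸ hf').intervalIntegrable hx (left_mem_Icc.2 hab.le)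
      _ ≤ ∫ _ in a..b, B := integral_mono_on hab.le (huIcc ▸ hf'.abs).intervalIntegrable
          intervalIntegrable_const hf'_le
      _ = (b - a) * B := by simp
  have hL : 0 ≤ b - a := sub_nonneg.2 hab.le
  calc ∫ x in a..b, f x ^ 2 ≤ ∫ _ in a..b, ((b - a) * B) ^ 2 :=
        integral_mono_on hab.le (huIcc ▸ hf.pow 2).intervalIntegrable intervalIntegrable_const
          fun x hx => (sq_abs _).symm.trans_le (pow_le_pow_left₀ (abs_nonneg _) (hf_le x hx) 2)
    _ = (b - a) ^ 3 * B ^ 2 := by simp; ring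
    _ ≤ (b - a) ^ 3 * ((b - a) * ∫ x in a..b, f'' x ^ 2) :=
        mul_le_mul_of_nonneg_left (sq_intervalIntegral_abs_le hab.le hf'') (pow_nonneg hL 3)
    _ = (b - a) ^ 4 * ∫ x in a..b, f'' x ^ 2 := by ring

end Interval

lemma ContDiffOn.hasDerivAt_derivWithin_Icc {a b x : ℝ} {f : ℝ → ℝ} {n : WithTop ℕ∞}
    (hf : ContDiffOn ℝ n f (Icc a b)) (hn : n ≠ 0) (hx : x ∈ Ioo a b) :
    HasDerivAt f (derivWithin f (Icc a b) x) x :=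
  (hf.differentiableOn hn x (Ioo_subset_Icc_self hx)).hasDerivWithinAt.hasDerivAt
    (Icc_mem_nhds hx.1 hx.2)

lemma lintegral_sq_sub_chord_le {a b : ℝ} (hab : a < b) {φ : ℝ → ℝ}
    (hφ : ContDiffOn ℝ 2 φ (Icc a b)) :
    ∫⁻ x in Ioo a b, ENNReal.ofReal ((φ x - (φ a + (φ b - φ a) * (x - a) / (b - a))) ^ 2)
      ≤ ENNReal.ofReal ((b - a) ^ 4) *
        ∫⁻ x in Ioo a b, ENNReal.ofReal (deriv (deriv φ) x ^ 2) := by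
  have hU : UniqueDiffOn ℝ (Icc a b) := uniqueDiffOn_Icc hab
  set φ' := derivWithin φ (Icc a b)
  set φ'' := derivWithin φ' (Icc a b)
  have hφ' : ContDiffOn ℝ 1 φ' (Icc a b) := hφ.derivWithin hU (by norm_num)
  have hφ'' : ContinuousOn φ'' (Icc a b) := hφ'.continuousOn_derivWithin hU le_rfl
  set m := (φ b - φ a) / (b - a)
  set f := fun x => φ x - (φ a + (φ b - φ a) * (x - a) / (b - a))
  have hf : ContinuousOn f (Icc a b) := hφ.continuousOn.sub (by fun_prop)
  have hchord (x : ℝ) : HasDerivAt (fun x => φ a + (φ b - φ a) * (x - a) / (b - a)) m x := by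
    simpa [m, mul_div_assoc] using
      (((hasDerivAt_id x).sub_const a).const_mul (φ b - φ a)).div_const (b - a) |>.const_add (φ a)
  have hreal : ∫ x in a..b, f x ^ 2 ≤ (b - a) ^ 4 * ∫ x in a..b, φ'' x ^ 2 :=
    integral_sq_le_of_eq_zero_of_eq_zero hab hf (hφ'.continuousOn.sub continuousOn_const) hφ''
      (fun x hx => (hφ.hasDerivAt_derivWithin_Icc two_ne_zero hx).sub (hchord x))
      (fun x hx => (hφ'.hasDerivAt_derivWithin_Icc one_ne_zero hx).sub_const m)
      (by simp [f]) (by simp [f, div_self (sub_ne_zero.2 hab.ne'), mul_div_assoc])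
  have hφ''_eq : EqOn (fun x => ENNReal.ofReal (deriv (deriv φ) x ^ 2))
      (fun x => ENNReal.ofReal (φ'' x ^ 2)) (Ioo a b) := fun x hx => by
    have hderiv : deriv φ =ᶠ[nhds x] φ' := by
      filter_upwards [isOpen_Ioo.mem_nhds hx] with y hy
      exact (hφ.hasDerivAt_derivWithin_Icc two_ne_zero hy).deriv
    dsimp only
    rw [hderiv.deriv_eq, (hφ'.hasDerivAt_derivWithin_Icc one_ne_zero hx).deriv]
  have hofReal {g : ℝ → ℝ} (hg : ContinuousOn g (Icc a b)) :
      ∫⁻ x in Ioo a b, ENNReal.ofReal (g x ^ 2) = ENNReal.ofReal (∫ x in a..b, g x ^ 2) := by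
    have hint : IntegrableOn (fun x => g x ^ 2) (Ioo a b) :=
      (hg.pow 2).integrableOn_Icc.mono_set Ioo_subset_Icc_self
    rw [intervalIntegral.integral_of_le hab.le, integral_Ioc_eq_integral_Ioo,
      ofReal_integral_eq_lintegral_ofReal hint (ae_of_all _ fun _ => sq_nonneg _)]
  rw [setLIntegral_congr_fun measurableSet_Ioo hφ''_eq, hofReal hf, hofReal hφ'',
    ← ENNReal.ofReal_mul (by positivity)]
  exact ENNReal.ofReal_le_ofReal hreal

lemma lintegral_Ioc_eq_sum {α : Type*} [LinearOrder α] [TopologicalSpace α] [OrderClosedTopology α]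
    [MeasurableSpace α] [OpensMeasurableSpace α] {μ : Measure α} {f : α → ENNReal} {t : ℕ → α}
    {n : ℕ} (ht : MonotoneOn t (Iic n)) :
    ∫⁻ x in Ioc (t 0) (t n), f x ∂μ =
      ∑ j ∈ Finset.range n, ∫⁻ x in Ioc (t j) (t (j + 1)), f x ∂μ := by
  induction n with
  | zero => simp
  | succ n ih =>
    rw [Finset.sum_range_succ, ← ih (ht.mono (Iic_subset_Iic.2 n.le_succ)),
      ← lintegral_union measurableSet_Ioc (Ioc_disjoint_Ioc_of_le le_rfl),
      Ioc_union_Ioc_eq_Ioc (ht (by simp) (by simp) n.zero_le) (ht (by simp) (by simp) n.le_succ)]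

lemma lintegral_sq_sub_piecewise_chord_le {n : ℕ} {t : ℕ → ℝ} (ht : StrictMonoOn t (Iic n))
    {h : ℝ} (hh : ∀ j < n, t (j + 1) - t j ≤ h) {φ P : ℝ → ℝ}
    (hφ : ContDiffOn ℝ 2 φ (Icc (t 0) (t n)))
    (hP : ∀ j < n, ∀ x ∈ Icc (t j) (t (j + 1)),
      P x = φ (t j) + (φ (t (j + 1)) - φ (t j)) * (x - t j) / (t (j + 1) - t j)) :
    ∫⁻ x in Ioo (t 0) (t n), ENNReal.ofReal ((φ x - P x) ^ 2)
      ≤ ENNReal.ofReal (h ^ 4) *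
        ∫⁻ x in Ioo (t 0) (t n), ENNReal.ofReal (deriv (deriv φ) x ^ 2) := by
  have piece : ∀ j ∈ Finset.range n,
      ∫⁻ x in Ioc (t j) (t (j + 1)), ENNReal.ofReal ((φ x - P x) ^ 2)
        ≤ ENNReal.ofReal (h ^ 4) *
          ∫⁻ x in Ioc (t j) (t (j + 1)), ENNReal.ofReal (deriv (deriv φ) x ^ 2) := by
    intro j hj
    rw [Finset.mem_range] at hj
    have hlt : t j < t (j + 1) := ht (by simp; omega) (by simp; omega) j.lt_succ_self
    have hsub : Icc (t j) (t (j + 1)) ⊆ Icc (t 0) (t n) :=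
      Icc_subset_Icc (ht.monotoneOn (by simp) (by simp; omega) j.zero_le)
        (ht.monotoneOn (by simp; omega) (by simp) hj)
    rw [← setLIntegral_congr Ioo_ae_eq_Ioc, ← setLIntegral_congr Ioo_ae_eq_Ioc]
    calc ∫⁻ x in Ioo (t j) (t (j + 1)), ENNReal.ofReal ((φ x - P x) ^ 2)
        = ∫⁻ x in Ioo (t j) (t (j + 1)), ENNReal.ofReal ((φ x - (φ (t j) +
            (φ (t (j + 1)) - φ (t j)) * (x - t j) / (t (j + 1) - t j))) ^ 2) :=
          setLIntegral_congr_fun measurableSet_Ioo fun x hx => by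
            rw [hP j hj x (Ioo_subset_Icc_self hx)]
      _ ≤ _ := lintegral_sq_sub_chord_le hlt (hφ.mono hsub)
      _ ≤ _ := by
          gcongr
          exact hh j hj
  calc ∫⁻ x in Ioo (t 0) (t n), ENNReal.ofReal ((φ x - P x) ^ 2)
      = ∑ j ∈ Finset.range n, ∫⁻ x in Ioc (t j) (t (j + 1)), ENNReal.ofReal ((φ x - P x) ^ 2) := by
        rw [setLIntegral_congr Ioo_ae_eq_Ioc, lintegral_Ioc_eq_sum ht.monotoneOn]
    _ ≤ _ := Finset.sum_le_sum piece
    _ = _ := by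
        rw [← Finset.mul_sum, ← lintegral_Ioc_eq_sum ht.monotoneOn,
          setLIntegral_congr Ioo_ae_eq_Ioc]

lemma lintegral_ofReal_mul_le_of_le {α : Type*} [MeasurableSpace α] {μ : Measure α}
    {F G : α → ℝ} (hF : 0 ≤ F) (hG : 0 ≤ G) {c : ENNReal} {r : ℝ} (hr : 0 < r) (hr1 : r ≤ 1)
    (hle : ∫⁻ x, ENNReal.ofReal (F x) ∂μ ≤ c * ∫⁻ x, ENNReal.ofReal (G x) ∂μ) :
    ∫⁻ x, ENNReal.ofReal (F x * r) ∂μ ≤ c * ∫⁻ x, ENNReal.ofReal (G x / r) ∂μ :=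
  calc ∫⁻ x, ENNReal.ofReal (F x * r) ∂μ = (∫⁻ x, ENNReal.ofReal (F x) ∂μ) * ENNReal.ofReal r := by
        simp_rw [ENNReal.ofReal_mul (hF _)]
        exact lintegral_mul_const' _ _ ENNReal.ofReal_ne_top
    _ ≤ c * (∫⁻ x, ENNReal.ofReal (G x) ∂μ) * ENNReal.ofReal r⁻¹ := by
        gcongr
        exact hr1.trans ((one_le_inv₀ hr).2 hr1)
    _ = c * ∫⁻ x, ENNReal.ofReal (G x / r) ∂μ := by
        simp_rw [div_eq_mul_inv, ENNReal.ofReal_mul (hG _)]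
        rw [lintegral_mul_const' _ _ ENNReal.ofReal_ne_top, mul_assoc]

section Interpolant

variable {N : ℕ} {t : ℕ → ℝ} {e : ℕ → ℝ → ℝ}

lemma interp_apply_node (hnode : ∀ i < N, ∀ j < N, e i (t j) = if i = j then 1 else 0)
    (u : ℝ × ℝ → ℝ) (r : ℝ) {k : ℕ} (hk : k < N) :
    interp N t e u (r, t k) = u (r, t k) := by
  dsimp only [interp]
  rw [Finset.sum_eq_single_of_mem k (Finset.mem_range.2 hk) fun i hi hik => by
    rw [hnode i (Finset.mem_range.1 hi) k hk, if_neg hik, mul_zero], hnode k hk k hk, if_pos rfl,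
    mul_one]

lemma interp_eq_chord (hnode : ∀ i < N, ∀ j < N, e i (t j) = if i = j then 1 else 0)
    {j : ℕ} (hj : j + 1 < N)
    (hlin : ∀ i < N, ∀ x ∈ Icc (t j) (t (j + 1)),
      e i x = e i (t j) + (e i (t (j + 1)) - e i (t j)) * (x - t j) / (t (j + 1) - t j))
    (u : ℝ × ℝ → ℝ) (r : ℝ) {θ : ℝ} (hθ : θ ∈ Icc (t j) (t (j + 1))) :
    interp N t e u (r, θ) =
      u (r, t j) + (u (r, t (j + 1)) - u (r, t j)) * (θ - t j) / (t (j + 1) - t j) := by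
  rw [← interp_apply_node hnode u r (j.lt_succ_self.trans hj), ← interp_apply_node hnode u r hj]
  dsimp only [interp]
  rw [Finset.sum_congr rfl fun i hi => by rw [hlin i (Finset.mem_range.1 hi) θ hθ]]
  simp only [mul_add, Finset.sum_add_distrib, ← Finset.sum_sub_distrib, Finset.sum_mul,
    Finset.sum_div]
  congr 1
  exact Finset.sum_congr rfl fun i _ => by ring

end Interpolant

theorem stmt9_general (Θ : ℝ)
    (N : ℕ) (t : ℕ → ℝ) (e : ℕ → ℝ → ℝ)
    (ht0 : t 0 = 0) (htN : t (N - 1) = Θ)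
    (htmono : ∀ j, j + 1 < N → t j < t (j + 1))
    (hnode : ∀ i < N, ∀ j < N, e i (t j) = if i = j then 1 else 0)
    (hlin : ∀ i < N, ∀ j, j + 1 < N → ∀ x ∈ Icc (t j) (t (j + 1)),
      e i x = e i (t j) + (e i (t (j + 1)) - e i (t j)) * (x - t j) / (t (j + 1) - t j))
    (h : ℝ) (hmax : IsGreatest ((fun j => t (j + 1) - t j) '' {j : ℕ | j + 1 < N}) h)
    (u : ℝ × ℝ → ℝ) (hu : ContDiffOn ℝ 2 u (Icc (0:ℝ) 1 ×ˢ Icc (0:ℝ) Θ)) :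
    wL2r Θ (fun p => u p - interp N t e u p)
      ≤ ENNReal.ofReal (h ^ 4) * wL2invr Θ (pd2 (pd2 u)) := by
  have ht : StrictMonoOn t (Iic (N - 1)) :=
    strictMonoOn_Iic_of_lt_succ fun m hm => htmono m (by omega)
  have hslice : ∀ r ∈ Icc (0:ℝ) 1,
      ∫⁻ θ in Ioo 0 Θ, ENNReal.ofReal ((u (r, θ) - interp N t e u (r, θ)) ^ 2)
        ≤ ENNReal.ofReal (h ^ 4) * ∫⁻ θ in Ioo 0 Θ, ENNReal.ofReal (pd2 (pd2 u) (r, θ) ^ 2) := by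
    intro r hr
    have hφ : ContDiffOn ℝ 2 (fun θ => u (r, θ)) (Icc (t 0) (t (N - 1))) := by
      rw [ht0, htN]
      exact hu.comp (contDiff_const.prodMk contDiff_id).contDiffOn fun θ hθ => ⟨hr, hθ⟩
    have key := lintegral_sq_sub_piecewise_chord_le ht
      (fun j hj => hmax.2 ⟨j, (by omega : j + 1 < N), rfl⟩) hφ
      fun j hj θ hθ => interp_eq_chord hnode (by omega) (fun i hi => hlin i hi j (by omega)) u r hθ
    rw [ht0, htN] at key
    -- `pd2 (pd2 u) (r, ·)` unfolds to `deriv (deriv fun θ => u (r, θ))`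
    exact key
  unfold wL2r wL2invr
  rw [← lintegral_const_mul' _ _ ENNReal.ofReal_ne_top]
  exact setLIntegral_mono' measurableSet_Ioo fun r hr =>
    lintegral_ofReal_mul_le_of_le (fun _ => sq_nonneg _) (fun _ => sq_nonneg _) hr.1 hr.2.le
      (hslice r (Ioo_subset_Icc_self hr))

/-- `L²_r` error estimate for the interpolant: for `u` twice
continuously differentiable on `[0,1] × [0,Θ]`,
`‖u − Πu‖²_{L²_r(Q)} ≤ h⁴ ‖∂_{θθ} u‖²_{L²_{1/r}(Q)}` in `[0,∞]`,
where `h = max_j (θ_{j+1} − θ_j)`. -/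
theorem stmt9 (Θ : ℝ) (hΘ₀ : 0 < Θ) (hΘ₂ : Θ < 2 * π)
    (N : ℕ) (hN : 2 ≤ N) (t : ℕ → ℝ) (e : ℕ → ℝ → ℝ)
    (ht0 : t 0 = 0) (htN : t (N - 1) = Θ)
    (htmono : ∀ j, j + 1 < N → t j < t (j + 1))
    (hnode : ∀ i < N, ∀ j < N, e i (t j) = if i = j then 1 else 0)
    (hlin : ∀ i < N, ∀ j, j + 1 < N → ∀ x ∈ Icc (t j) (t (j + 1)),
      e i x = e i (t j) + (e i (t (j + 1)) - e i (t j)) * (x - t j) / (t (j + 1) - t j))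
    (h : ℝ) (hmax : IsGreatest ((fun j => t (j + 1) - t j) '' {j : ℕ | j + 1 < N}) h)
    (u : ℝ × ℝ → ℝ) (hu : ContDiffOn ℝ 2 u (Icc (0:ℝ) 1 ×ˢ Icc (0:ℝ) Θ)) :
    wL2r Θ (fun p => u p - interp N t e u p)
      ≤ ENNReal.ofReal (h ^ 4) * wL2invr Θ (pd2 (pd2 u)) :=
  stmt9_general Θ N t e ht0 htN htmono hnode hlin h hmax u hu
end

section
/- For every twice continuously differentiable function u on [0,1] × [0,Θ], the interpolation error in the weighted H¹ norm satisfies ‖u − Πu‖²_{L²_r(Q)} + ‖∂_r (u − Πu)‖²_{L²_r(Q)} + ‖∂_θ (u − Πu)‖²_{L²_{1/r}(Q)} ≤ h² (h² + 4) ( ‖∂_{rθ} u‖²_{L²_r(Q)} + ‖∂_{θθ} u‖²_{L²_{1/r}(Q)} ), where ∂_θ (u − Πu) is defined for θ outside the partition nodes and the inequality holds in [0,∞]. -/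
/-!
On a cell `[a, b]` of the partition the interpolant `Πf` is the affine interpolant of `f`, so
`φ = f - Πf` vanishes at `a` and `φ' = f' - s`, where the slope `s` is the mean of `f'` on `[a, b]`.
Two facts drive everything: the Poincaré inequality `∫ φ² ≤ (b - a)² ∫ φ'²` for `φ(a) = 0`
(fundamental theorem of calculus and Cauchy–Schwarz), and the mean `s` minimising `c ↦ ∫ (f' - c)²`.
With `c = f'(a)` and `c = 0` the latter gives `∫ (f' - s)² ≤ (b - a)² ∫ f''²` and
`∫ (f' - s)² ≤ ∫ f'²`. Summed over the cells and applied to the slices `u(r, ·)` and `∂ᵣu(r, ·)`,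
this bounds the three error terms by `h⁴ ‖∂θθ u‖²_{1/r}` (as `r ≤ 1/r`), `h² ‖∂rθ u‖²_r` and
`h² ‖∂θθ u‖²_{1/r}`.
-/

open MeasureTheory Set Real

namespace WeightedInterpolation

open intervalIntegral Topology
open scoped ENNReal

section OneDimensional

variable {a b : ℝ}

theorem integral_sub_const_sq {ψ : ℝ → ℝ} (hψ : ContinuousOn ψ (uIcc a b)) (c : ℝ) :
    ∫ x in a..b, (ψ x - c) ^ 2
      = (∫ x in a..b, ψ x ^ 2) - 2 * c * (∫ x in a..b, ψ x) + (b - a) * c ^ 2 := by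
  have h1 : IntervalIntegrable ψ volume a b := hψ.intervalIntegrable
  have h2 : IntervalIntegrable (fun x => ψ x ^ 2) volume a b := (hψ.pow 2).intervalIntegrable
  have hexp : ∀ x, (ψ x - c) ^ 2 = ψ x ^ 2 - 2 * c * ψ x + c ^ 2 := fun x => by ring
  simp_rw [hexp]
  rw [integral_add (h2.sub (h1.const_mul _)) intervalIntegrable_const,
    integral_sub h2 (h1.const_mul _), intervalIntegral.integral_const_mul,
    intervalIntegral.integral_const, smul_eq_mul]

theorem integral_sub_average_sq_le (hab : a < b) {ψ : ℝ → ℝ}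
    (hψ : ContinuousOn ψ (Icc a b)) (c : ℝ) :
    ∫ x in a..b, (ψ x - (∫ y in a..b, ψ y) / (b - a)) ^ 2
      ≤ ∫ x in a..b, (ψ x - c) ^ 2 := by
  rw [← uIcc_of_le hab.le] at hψ
  rw [integral_sub_const_sq hψ, integral_sub_const_sq hψ]
  set m := (∫ y in a..b, ψ y) / (b - a)
  have hI : ∫ y in a..b, ψ y = (b - a) * m := by
    rw [mul_div_cancel₀ _ (sub_pos.2 hab).ne']
  rw [hI]
  nlinarith [mul_nonneg (sub_pos.2 hab).le (sq_nonneg (m - c))]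

theorem sq_integral_le_mul_integral_sq (hab : a ≤ b) {ψ : ℝ → ℝ}
    (hψ : ContinuousOn ψ (Icc a b)) :
    (∫ x in a..b, ψ x) ^ 2 ≤ (b - a) * ∫ x in a..b, ψ x ^ 2 := by
  rcases hab.eq_or_lt with rfl | hab
  · simp
  set m := (∫ y in a..b, ψ y) / (b - a)
  have hI : ∫ y in a..b, ψ y = (b - a) * m := by
    rw [mul_div_cancel₀ _ (sub_pos.2 hab).ne']
  have h := integral_sub_const_sq (by rwa [uIcc_of_le hab.le]) m
  have h0 : 0 ≤ ∫ x in a..b, (ψ x - m) ^ 2 := integral_nonneg hab.le fun _ _ => sq_nonneg _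
  rw [hI] at h ⊢
  nlinarith [sub_pos.2 hab]

theorem sq_le_mul_integral_sq_of_left_eq_zero (hab : a ≤ b) {φ φ' : ℝ → ℝ}
    (hφ : ContinuousOn φ (Icc a b)) (hφ' : ContinuousOn φ' (Icc a b))
    (hd : ∀ x ∈ Ioo a b, HasDerivAt φ (φ' x) x) (ha : φ a = 0) {x : ℝ}
    (hx : x ∈ Icc a b) :
    φ x ^ 2 ≤ (b - a) * ∫ y in a..b, φ' y ^ 2 := by
  have hsub : Icc a x ⊆ Icc a b := Icc_subset_Icc_right hx.2
  have hFTC : ∫ y in a..x, φ' y = φ x := by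
    rw [integral_eq_sub_of_hasDerivAt_of_le hx.1 (hφ.mono hsub)
      (fun y hy => hd y ⟨hy.1, hy.2.trans_le hx.2⟩)
      ((hφ'.mono hsub).intervalIntegrable_of_Icc hx.1), ha, sub_zero]
  have hmono : ∫ y in a..x, φ' y ^ 2 ≤ ∫ y in a..b, φ' y ^ 2 :=
    integral_mono_interval le_rfl hx.1 hx.2 (.of_forall fun _ => sq_nonneg _)
      ((hφ'.pow 2).intervalIntegrable_of_Icc hab)
  have hnn : 0 ≤ ∫ y in a..x, φ' y ^ 2 := integral_nonneg hx.1 fun _ _ => sq_nonneg _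
  calc φ x ^ 2 = (∫ y in a..x, φ' y) ^ 2 := by rw [hFTC]
    _ ≤ (x - a) * ∫ y in a..x, φ' y ^ 2 := sq_integral_le_mul_integral_sq hx.1 (hφ'.mono hsub)
    _ ≤ (b - a) * ∫ y in a..b, φ' y ^ 2 :=
        mul_le_mul (by linarith [hx.2]) hmono hnn (by linarith [hx.2])

theorem integral_sq_le_of_left_eq_zero (hab : a ≤ b) {φ φ' : ℝ → ℝ}
    (hφ : ContinuousOn φ (Icc a b)) (hφ' : ContinuousOn φ' (Icc a b))
    (hd : ∀ x ∈ Ioo a b, HasDerivAt φ (φ' x) x) (ha : φ a = 0) :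
    ∫ x in a..b, φ x ^ 2 ≤ (b - a) ^ 2 * ∫ x in a..b, φ' x ^ 2 := by
  calc ∫ x in a..b, φ x ^ 2 ≤ ∫ _ in a..b, (b - a) * ∫ y in a..b, φ' y ^ 2 :=
        integral_mono_on hab ((hφ.pow 2).intervalIntegrable_of_Icc hab) intervalIntegrable_const
          fun x hx => sq_le_mul_integral_sq_of_left_eq_zero hab hφ hφ' hd ha hx
    _ = (b - a) ^ 2 * ∫ x in a..b, φ' x ^ 2 := by
        rw [intervalIntegral.integral_const, smul_eq_mul]; ring

noncomputable def linInterp (a b : ℝ) (f : ℝ → ℝ) (x : ℝ) : ℝ :=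
  f a + slope f a b * (x - a)

theorem hasDerivAt_linInterp (f : ℝ → ℝ) (x : ℝ) :
    HasDerivAt (linInterp a b f) (slope f a b) x := by
  unfold linInterp
  simpa using ((hasDerivAt_id x).sub_const a).const_mul (slope f a b) |>.const_add (f a)

theorem continuous_linInterp (f : ℝ → ℝ) : Continuous (linInterp a b f) :=
  continuous_iff_continuousAt.2 fun x => (hasDerivAt_linInterp f x).continuousAt

theorem slope_eq_average (hab : a < b) {f f' : ℝ → ℝ} (hf : ContinuousOn f (Icc a b))
    (hf' : ContinuousOn f' (Icc a b)) (hd : ∀ x ∈ Ioo a b, HasDerivAt f (f' x) x) :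
    slope f a b = (∫ x in a..b, f' x) / (b - a) := by
  rw [slope_def_field, integral_eq_sub_of_hasDerivAt_of_le hab.le hf hd
    (hf'.intervalIntegrable_of_Icc hab.le)]

theorem integral_sub_linInterp_sq_le (hab : a < b) {f f' : ℝ → ℝ}
    (hf : ContinuousOn f (Icc a b)) (hf' : ContinuousOn f' (Icc a b))
    (hd : ∀ x ∈ Ioo a b, HasDerivAt f (f' x) x) :
    ∫ x in a..b, (f x - linInterp a b f x) ^ 2
      ≤ (b - a) ^ 2 * ∫ x in a..b, (f' x - slope f a b) ^ 2 :=
  integral_sq_le_of_left_eq_zero hab.le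
    (hf.sub (continuous_linInterp f).continuousOn)
    (hf'.sub continuousOn_const) (fun x hx => (hd x hx).sub (hasDerivAt_linInterp f x))
    (by simp [linInterp])

theorem integral_sub_slope_sq_le_integral_sq (hab : a < b) {f f' : ℝ → ℝ}
    (hf : ContinuousOn f (Icc a b)) (hf' : ContinuousOn f' (Icc a b))
    (hd : ∀ x ∈ Ioo a b, HasDerivAt f (f' x) x) :
    ∫ x in a..b, (f' x - slope f a b) ^ 2 ≤ ∫ x in a..b, f' x ^ 2 := by
  simpa [slope_eq_average hab hf hf' hd] using integral_sub_average_sq_le hab hf' 0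

theorem integral_sub_slope_sq_le (hab : a < b) {f f' f'' : ℝ → ℝ}
    (hf : ContinuousOn f (Icc a b)) (hf' : ContinuousOn f' (Icc a b))
    (hf'' : ContinuousOn f'' (Icc a b)) (hd : ∀ x ∈ Ioo a b, HasDerivAt f (f' x) x)
    (hd' : ∀ x ∈ Ioo a b, HasDerivAt f' (f'' x) x) :
    ∫ x in a..b, (f' x - slope f a b) ^ 2 ≤ (b - a) ^ 2 * ∫ x in a..b, f'' x ^ 2 := by
  rw [slope_eq_average hab hf hf' hd]
  exact (integral_sub_average_sq_le hab hf' (f' a)).trans <|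
    integral_sq_le_of_left_eq_zero hab.le (hf'.sub continuousOn_const) hf''
      (fun x hx => (hd' x hx).sub_const _) (sub_self _)

theorem lintegral_Ioo_ofReal_sq (hab : a ≤ b) {F φ : ℝ → ℝ} (hF : EqOn F φ (Ioo a b))
    (hφ : ContinuousOn φ (Icc a b)) :
    ∫⁻ x in Ioo a b, ENNReal.ofReal (F x ^ 2) = ENNReal.ofReal (∫ x in a..b, φ x ^ 2) := by
  have hint : IntegrableOn (fun x => φ x ^ 2) (Ioo a b) :=
    ((hφ.pow 2).integrableOn_compact isCompact_Icc).mono_set Ioo_subset_Icc_self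
  rw [setLIntegral_congr_fun measurableSet_Ioo fun x hx => by rw [hF hx],
    ← ofReal_integral_eq_lintegral_ofReal hint (.of_forall fun _ => sq_nonneg _),
    integral_of_le hab, integral_Ioc_eq_integral_Ioo]

theorem lintegral_sq_le_of_integral_sq_le (hab : a ≤ b) {F G φ ψ : ℝ → ℝ}
    (hF : EqOn F φ (Ioo a b)) (hG : EqOn G ψ (Ioo a b))
    (hφ : ContinuousOn φ (Icc a b)) (hψ : ContinuousOn ψ (Icc a b)) {c : ℝ} (hc : 0 ≤ c)
    (h : ∫ x in a..b, φ x ^ 2 ≤ c * ∫ x in a..b, ψ x ^ 2) :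
    ∫⁻ x in Ioo a b, ENNReal.ofReal (F x ^ 2)
      ≤ ENNReal.ofReal c * ∫⁻ x in Ioo a b, ENNReal.ofReal (G x ^ 2) := by
  rw [lintegral_Ioo_ofReal_sq hab hF hφ, lintegral_Ioo_ofReal_sq hab hG hψ,
    ← ENNReal.ofReal_mul hc]
  exact ENNReal.ofReal_le_ofReal h

theorem hasDerivAt_derivWithin_Icc {f : ℝ → ℝ} (hf : DifferentiableOn ℝ f (Icc a b))
    {x : ℝ} (hx : x ∈ Ioo a b) : HasDerivAt f (derivWithin f (Icc a b) x) x :=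
  (hf x (Ioo_subset_Icc_self hx)).hasDerivWithinAt.hasDerivAt (Icc_mem_nhds hx.1 hx.2)

theorem lintegral_sub_linInterp_sq_le (hab : a < b) {f : ℝ → ℝ}
    (hf : ContDiffOn ℝ 1 f (Icc a b)) :
    ∫⁻ x in Ioo a b, ENNReal.ofReal ((f x - linInterp a b f x) ^ 2)
      ≤ ENNReal.ofReal ((b - a) ^ 2) *
          ∫⁻ x in Ioo a b, ENNReal.ofReal ((deriv f x - slope f a b) ^ 2) := by
  have hd := fun x (hx : x ∈ Ioo a b) =>
    hasDerivAt_derivWithin_Icc (hf.differentiableOn one_ne_zero) hx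
  have hf' := hf.continuousOn_derivWithin (uniqueDiffOn_Icc hab) le_rfl
  exact lintegral_sq_le_of_integral_sq_le hab.le (fun _ _ => rfl)
    (fun x hx => by simp only [(hd x hx).deriv, Pi.sub_apply])
    (hf.continuousOn.sub (continuous_linInterp f).continuousOn) (hf'.sub continuousOn_const)
    (sq_nonneg _) (integral_sub_linInterp_sq_le hab hf.continuousOn hf' hd)

theorem lintegral_sub_slope_sq_le_lintegral_sq (hab : a < b) {f : ℝ → ℝ}
    (hf : ContDiffOn ℝ 1 f (Icc a b)) :
    ∫⁻ x in Ioo a b, ENNReal.ofReal ((deriv f x - slope f a b) ^ 2)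
      ≤ ∫⁻ x in Ioo a b, ENNReal.ofReal (deriv f x ^ 2) := by
  have hd := fun x (hx : x ∈ Ioo a b) =>
    hasDerivAt_derivWithin_Icc (hf.differentiableOn one_ne_zero) hx
  have hf' := hf.continuousOn_derivWithin (uniqueDiffOn_Icc hab) le_rfl
  simpa using lintegral_sq_le_of_integral_sq_le hab.le
    (fun x hx => by simp only [(hd x hx).deriv, Pi.sub_apply]) (fun x hx => (hd x hx).deriv)
    (hf'.sub continuousOn_const) hf' zero_le_one
    ((integral_sub_slope_sq_le_integral_sq hab hf.continuousOn hf' hd).trans_eq (one_mul _).symm)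

theorem lintegral_sub_slope_sq_le (hab : a < b) {f : ℝ → ℝ}
    (hf : ContDiffOn ℝ 2 f (Icc a b)) :
    ∫⁻ x in Ioo a b, ENNReal.ofReal ((deriv f x - slope f a b) ^ 2)
      ≤ ENNReal.ofReal ((b - a) ^ 2) *
          ∫⁻ x in Ioo a b, ENNReal.ofReal (deriv (deriv f) x ^ 2) := by
  have hd := fun x (hx : x ∈ Ioo a b) =>
    hasDerivAt_derivWithin_Icc (hf.differentiableOn two_ne_zero) hx
  have hf'C1 : ContDiffOn ℝ 1 (derivWithin f (Icc a b)) (Icc a b) :=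
    hf.derivWithin (uniqueDiffOn_Icc hab) (by norm_num)
  have hd' := fun x (hx : x ∈ Ioo a b) =>
    hasDerivAt_derivWithin_Icc (hf'C1.differentiableOn one_ne_zero) hx
  have hderiv2 : ∀ x ∈ Ioo a b,
      deriv (deriv f) x = derivWithin (derivWithin f (Icc a b)) (Icc a b) x := fun x hx => by
    have hev : deriv f =ᶠ[𝓝 x] derivWithin f (Icc a b) := by
      filter_upwards [Ioo_mem_nhds hx.1 hx.2] with y hy using (hd y hy).deriv
    rw [hev.deriv_eq, (hd' x hx).deriv]
  exact lintegral_sq_le_of_integral_sq_le hab.le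
    (fun x hx => by simp only [(hd x hx).deriv, Pi.sub_apply]) hderiv2
    (hf'C1.continuousOn.sub continuousOn_const)
    (hf'C1.continuousOn_derivWithin (uniqueDiffOn_Icc hab) le_rfl) (sq_nonneg _)
    (integral_sub_slope_sq_le hab hf.continuousOn hf'C1.continuousOn
      (hf'C1.continuousOn_derivWithin (uniqueDiffOn_Icc hab) le_rfl) hd hd')

end OneDimensional

section HatBasis

open Finset

/-- `interp N t e u (r, ·)` is definitionally `nodalInterp N t e (fun θ => u (r, θ))`. -/
noncomputable def nodalInterp (N : ℕ) (t : ℕ → ℝ) (e : ℕ → ℝ → ℝ) (f : ℝ → ℝ) (x : ℝ) :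
    ℝ :=
  ∑ i ∈ range N, f (t i) * e i x

structure IsHatBasis (N : ℕ) (t : ℕ → ℝ) (e : ℕ → ℝ → ℝ) : Prop where
  apply_node : ∀ i < N, ∀ j < N, e i (t j) = if i = j then 1 else 0
  eqOn_linInterp : ∀ i < N, ∀ j, j + 1 < N →
    EqOn (e i) (linInterp (t j) (t (j + 1)) (e i)) (Icc (t j) (t (j + 1)))

variable {N : ℕ} {t : ℕ → ℝ} {e : ℕ → ℝ → ℝ}

theorem IsHatBasis.nodalInterp_node (hb : IsHatBasis N t e) (f : ℝ → ℝ) {k : ℕ}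
    (hk : k < N) :
    nodalInterp N t e f (t k) = f (t k) := by
  rw [nodalInterp, Finset.sum_eq_single k
    (fun i hi hik => by rw [hb.apply_node i (mem_range.1 hi) k hk, if_neg hik, mul_zero])
    (fun hk' => absurd (mem_range.2 hk) hk'), hb.apply_node k hk k hk, if_pos rfl, mul_one]

theorem IsHatBasis.sum_mul_slope (hb : IsHatBasis N t e) (f : ℝ → ℝ) {j : ℕ}
    (hj : j + 1 < N) :
    ∑ i ∈ range N, f (t i) * slope (e i) (t j) (t (j + 1)) = slope f (t j) (t (j + 1)) := by
  have h₀ := hb.nodalInterp_node f (k := j) (by omega)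
  have h₁ := hb.nodalInterp_node f hj
  simp only [nodalInterp] at h₀ h₁
  simp_rw [slope_def_field, mul_div_assoc', mul_sub, ← sum_div, sum_sub_distrib, h₀, h₁]

theorem IsHatBasis.nodalInterp_eqOn_linInterp (hb : IsHatBasis N t e) (f : ℝ → ℝ) {j : ℕ}
    (hj : j + 1 < N) :
    EqOn (nodalInterp N t e f) (linInterp (t j) (t (j + 1)) f) (Icc (t j) (t (j + 1))) := by
  intro x hx
  calc nodalInterp N t e f x
      = ∑ i ∈ range N, f (t i) * linInterp (t j) (t (j + 1)) (e i) x :=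
        sum_congr rfl fun i hi => by rw [hb.eqOn_linInterp i (mem_range.1 hi) j hj hx]
    _ = nodalInterp N t e f (t j)
          + (∑ i ∈ range N, f (t i) * slope (e i) (t j) (t (j + 1))) * (x - t j) := by
        simp only [linInterp, nodalInterp, mul_add, sum_add_distrib, sum_mul, mul_assoc]
    _ = linInterp (t j) (t (j + 1)) f x := by
        rw [hb.nodalInterp_node f (by omega), hb.sum_mul_slope f hj, linInterp]

theorem IsHatBasis.nodalInterp_deriv_eqOn (hb : IsHatBasis N t e) (f : ℝ → ℝ) {j : ℕ}
    (hj : j + 1 < N) :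
    EqOn (nodalInterp N t (fun i => deriv (e i)) f) (fun _ => slope f (t j) (t (j + 1)))
      (Ioo (t j) (t (j + 1))) := by
  intro x hx
  have hderiv : ∀ i < N, deriv (e i) x = slope (e i) (t j) (t (j + 1)) := fun i hi => by
    have hev : e i =ᶠ[𝓝 x] linInterp (t j) (t (j + 1)) (e i) := by
      filter_upwards [Ioo_mem_nhds hx.1 hx.2] with y hy
        using hb.eqOn_linInterp i hi j hj (Ioo_subset_Icc_self hy)
    rw [hev.deriv_eq, (hasDerivAt_linInterp _ x).deriv]
  rw [← hb.sum_mul_slope f hj]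
  exact sum_congr rfl fun i hi => by simp only [hderiv i (mem_range.1 hi)]

end HatBasis

section Partition

variable {t : ℕ → ℝ}

theorem lintegral_Ioo_eq_sum {n : ℕ} (ht : MonotoneOn t (Iic n)) (f : ℝ → ℝ≥0∞) :
    ∫⁻ x in Ioo (t 0) (t n), f x
      = ∑ j ∈ Finset.range n, ∫⁻ x in Ioo (t j) (t (j + 1)), f x := by
  induction n with
  | zero => simp
  | succ n ih =>
    rw [Finset.sum_range_succ, ← ih (ht.mono (Iic_subset_Iic.2 n.le_succ))]
    have h0n : t 0 ≤ t n := ht (by simp) (by simp) (Nat.zero_le n)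
    have hn : t n ≤ t (n + 1) := ht (by simp) (by simp) n.le_succ
    simp only [setLIntegral_congr Ioo_ae_eq_Ioc]
    rw [← Ioc_union_Ioc_eq_Ioc h0n hn,
      lintegral_union measurableSet_Ioc (Ioc_disjoint_Ioc_of_le le_rfl)]

theorem lintegral_Ioo_le_of_forall_subinterval {n : ℕ} (ht : MonotoneOn t (Iic n))
    {f g : ℝ → ℝ≥0∞} {C : ℝ≥0∞}
    (hfg : ∀ j < n, ∫⁻ x in Ioo (t j) (t (j + 1)), f x
      ≤ C * ∫⁻ x in Ioo (t j) (t (j + 1)), g x) :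
    ∫⁻ x in Ioo (t 0) (t n), f x ≤ C * ∫⁻ x in Ioo (t 0) (t n), g x := by
  rw [lintegral_Ioo_eq_sum ht, lintegral_Ioo_eq_sum ht, Finset.mul_sum]
  exact Finset.sum_le_sum fun j hj => hfg j (Finset.mem_range.1 hj)

theorem lt_succ_and_Icc_subset_of_strictMonoOn {N : ℕ} (ht : StrictMonoOn t (Iic (N - 1)))
    {j : ℕ} (hj : j + 1 < N) :
    t j < t (j + 1) ∧ Icc (t j) (t (j + 1)) ⊆ Icc (t 0) (t (N - 1)) := by
  refine ⟨ht (mem_Iic.2 (by omega)) (mem_Iic.2 (by omega)) j.lt_succ_self,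
    Icc_subset_Icc ?_ ?_⟩
  · exact ht.monotoneOn (mem_Iic.2 (by omega)) (mem_Iic.2 (by omega)) (Nat.zero_le j)
  · exact ht.monotoneOn (mem_Iic.2 (by omega)) (mem_Iic.2 le_rfl) (by omega)

theorem lintegral_Ioo_le_sq_mul_of_forall_subinterval {N : ℕ} {h : ℝ}
    (ht : StrictMonoOn t (Iic (N - 1))) (hgap : ∀ j, j + 1 < N → t (j + 1) - t j ≤ h)
    {f g : ℝ → ℝ≥0∞}
    (hfg : ∀ j, j + 1 < N → ∫⁻ x in Ioo (t j) (t (j + 1)), f x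
      ≤ ENNReal.ofReal ((t (j + 1) - t j) ^ 2) * ∫⁻ x in Ioo (t j) (t (j + 1)), g x) :
    ∫⁻ x in Ioo (t 0) (t (N - 1)), f x
      ≤ ENNReal.ofReal (h ^ 2) * ∫⁻ x in Ioo (t 0) (t (N - 1)), g x := by
  refine lintegral_Ioo_le_of_forall_subinterval ht.monotoneOn fun j hj => ?_
  have hj' : j + 1 < N := by omega
  refine (hfg j hj').trans (mul_le_mul_left (ENNReal.ofReal_le_ofReal ?_) _)
  exact pow_le_pow_left₀
    (sub_nonneg.2 (lt_succ_and_Icc_subset_of_strictMonoOn ht hj').1.le) (hgap j hj') 2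

end Partition

section PiecewiseLinear

variable {N : ℕ} {t : ℕ → ℝ} {e : ℕ → ℝ → ℝ} {h : ℝ} {f : ℝ → ℝ}

theorem IsHatBasis.lintegral_sub_nodalInterp_sq_le_deriv_sub (hb : IsHatBasis N t e)
    (ht : StrictMonoOn t (Iic (N - 1))) (hgap : ∀ j, j + 1 < N → t (j + 1) - t j ≤ h)
    (hf : ContDiffOn ℝ 1 f (Icc (t 0) (t (N - 1)))) :
    ∫⁻ x in Ioo (t 0) (t (N - 1)), ENNReal.ofReal ((f x - nodalInterp N t e f x) ^ 2)
      ≤ ENNReal.ofReal (h ^ 2) * ∫⁻ x in Ioo (t 0) (t (N - 1)),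
          ENNReal.ofReal ((deriv f x - nodalInterp N t (fun i => deriv (e i)) f x) ^ 2) := by
  refine lintegral_Ioo_le_sq_mul_of_forall_subinterval ht hgap fun j hj => ?_
  obtain ⟨hlt, hsub⟩ := lt_succ_and_Icc_subset_of_strictMonoOn ht hj
  rw [setLIntegral_congr_fun measurableSet_Ioo fun x hx => by
    rw [hb.nodalInterp_eqOn_linInterp f hj (Ioo_subset_Icc_self hx)]]
  conv_rhs => rw [setLIntegral_congr_fun measurableSet_Ioo fun x hx => by
    rw [hb.nodalInterp_deriv_eqOn f hj hx]]
  exact lintegral_sub_linInterp_sq_le hlt (hf.mono hsub)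

theorem IsHatBasis.lintegral_deriv_sub_sq_le_deriv_deriv (hb : IsHatBasis N t e)
    (ht : StrictMonoOn t (Iic (N - 1))) (hgap : ∀ j, j + 1 < N → t (j + 1) - t j ≤ h)
    (hf : ContDiffOn ℝ 2 f (Icc (t 0) (t (N - 1)))) :
    ∫⁻ x in Ioo (t 0) (t (N - 1)),
        ENNReal.ofReal ((deriv f x - nodalInterp N t (fun i => deriv (e i)) f x) ^ 2)
      ≤ ENNReal.ofReal (h ^ 2) *
          ∫⁻ x in Ioo (t 0) (t (N - 1)), ENNReal.ofReal (deriv (deriv f) x ^ 2) := by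
  refine lintegral_Ioo_le_sq_mul_of_forall_subinterval ht hgap fun j hj => ?_
  obtain ⟨hlt, hsub⟩ := lt_succ_and_Icc_subset_of_strictMonoOn ht hj
  rw [setLIntegral_congr_fun measurableSet_Ioo fun x hx => by
    rw [hb.nodalInterp_deriv_eqOn f hj hx]]
  exact lintegral_sub_slope_sq_le hlt (hf.mono hsub)

theorem IsHatBasis.lintegral_deriv_sub_sq_le_deriv (hb : IsHatBasis N t e)
    (ht : StrictMonoOn t (Iic (N - 1))) (hf : ContDiffOn ℝ 1 f (Icc (t 0) (t (N - 1)))) :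
    ∫⁻ x in Ioo (t 0) (t (N - 1)),
        ENNReal.ofReal ((deriv f x - nodalInterp N t (fun i => deriv (e i)) f x) ^ 2)
      ≤ ∫⁻ x in Ioo (t 0) (t (N - 1)), ENNReal.ofReal (deriv f x ^ 2) := by
  simpa using lintegral_Ioo_le_of_forall_subinterval (C := 1) ht.monotoneOn fun j hj => by
    have hj' : j + 1 < N := by omega
    obtain ⟨hlt, hsub⟩ := lt_succ_and_Icc_subset_of_strictMonoOn ht hj'
    rw [one_mul, setLIntegral_congr_fun measurableSet_Ioo fun x hx => by
      rw [hb.nodalInterp_deriv_eqOn f hj' hx]]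
    exact lintegral_sub_slope_sq_le_lintegral_sq hlt (hf.mono hsub)

theorem IsHatBasis.lintegral_sub_nodalInterp_sq_le_deriv_deriv (hb : IsHatBasis N t e)
    (ht : StrictMonoOn t (Iic (N - 1))) (hgap : ∀ j, j + 1 < N → t (j + 1) - t j ≤ h)
    (hf : ContDiffOn ℝ 2 f (Icc (t 0) (t (N - 1)))) :
    ∫⁻ x in Ioo (t 0) (t (N - 1)), ENNReal.ofReal ((f x - nodalInterp N t e f x) ^ 2)
      ≤ ENNReal.ofReal (h ^ 2 * h ^ 2) *
          ∫⁻ x in Ioo (t 0) (t (N - 1)), ENNReal.ofReal (deriv (deriv f) x ^ 2) := by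
  rw [ENNReal.ofReal_mul (sq_nonneg h), mul_assoc]
  exact (hb.lintegral_sub_nodalInterp_sq_le_deriv_sub ht hgap (hf.of_le one_le_two)).trans
    (mul_le_mul_right (hb.lintegral_deriv_sub_sq_le_deriv_deriv ht hgap hf) _)

theorem IsHatBasis.lintegral_sub_nodalInterp_sq_le_deriv (hb : IsHatBasis N t e)
    (ht : StrictMonoOn t (Iic (N - 1))) (hgap : ∀ j, j + 1 < N → t (j + 1) - t j ≤ h)
    (hf : ContDiffOn ℝ 1 f (Icc (t 0) (t (N - 1)))) :
    ∫⁻ x in Ioo (t 0) (t (N - 1)), ENNReal.ofReal ((f x - nodalInterp N t e f x) ^ 2)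
      ≤ ENNReal.ofReal (h ^ 2) *
          ∫⁻ x in Ioo (t 0) (t (N - 1)), ENNReal.ofReal (deriv f x ^ 2) :=
  (hb.lintegral_sub_nodalInterp_sq_le_deriv_sub ht hgap hf).trans
    (mul_le_mul_right (hb.lintegral_deriv_sub_sq_le_deriv ht hf) _)

end PiecewiseLinear

section Slices

variable {u : ℝ × ℝ → ℝ} {s T : Set ℝ} {r : ℝ}

theorem hasDerivAt_fst_slice {θ : ℝ} (hs : s ∈ 𝓝 r) (hθ : θ ∈ T)
    (hu : DifferentiableWithinAt ℝ u (s ×ˢ T) (r, θ)) :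
    HasDerivAt (fun x => u (x, θ)) (fderivWithin ℝ u (s ×ˢ T) (r, θ) (1, 0)) r := by
  have hline : HasDerivWithinAt (fun x : ℝ => (x, θ)) ((1 : ℝ), (0 : ℝ)) s r :=
    ((hasDerivAt_id r).prodMk (hasDerivAt_const r θ)).hasDerivWithinAt
  exact (hu.hasFDerivWithinAt.comp_hasDerivWithinAt r hline fun _ hx => mk_mem_prod hx hθ
    ).hasDerivAt hs

theorem contDiffOn_snd_slice {n : WithTop ℕ∞} (hu : ContDiffOn ℝ n u (s ×ˢ T))
    (hr : r ∈ s) :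
    ContDiffOn ℝ n (fun θ => u (r, θ)) T :=
  hu.comp (contDiff_const.prodMk contDiff_id).contDiffOn fun _ hθ => ⟨hr, hθ⟩

theorem contDiffOn_pd1_slice {m n : WithTop ℕ∞} (hu : ContDiffOn ℝ n u (s ×ˢ T))
    (hsT : UniqueDiffOn ℝ (s ×ˢ T)) (hmn : m + 1 ≤ n) (hs : s ∈ 𝓝 r) :
    ContDiffOn ℝ m (fun θ => pd1 u (r, θ)) T := by
  have hD : ContDiffOn ℝ m (fun p => fderivWithin ℝ u (s ×ˢ T) p (1, 0)) (s ×ˢ T) :=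
    (ContinuousLinearMap.apply ℝ ℝ ((1 : ℝ), (0 : ℝ))).contDiff.comp_contDiffOn
      (hu.fderivWithin hsT hmn)
  have hdiff := (hu.of_le (le_add_self.trans hmn)).differentiableOn one_ne_zero
  refine (contDiffOn_snd_slice hD (mem_of_mem_nhds hs)).congr fun θ hθ => ?_
  exact (hasDerivAt_fst_slice hs hθ (hdiff _ ⟨mem_of_mem_nhds hs, hθ⟩)).deriv

theorem pd1_sub_interp {N : ℕ} {t : ℕ → ℝ} {e : ℕ → ℝ → ℝ} (hs : s ∈ 𝓝 r)
    (hu : DifferentiableOn ℝ u (s ×ˢ T)) (ht : ∀ i < N, t i ∈ T) {x : ℝ} (hx : x ∈ T) :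
    pd1 (fun p => u p - interp N t e u p) (r, x)
      = pd1 u (r, x) - nodalInterp N t e (fun θ => pd1 u (r, θ)) x := by
  have hd : ∀ θ ∈ T, HasDerivAt (fun y => u (y, θ)) (pd1 u (r, θ)) r := fun θ hθ =>
    (hasDerivAt_fst_slice hs hθ (hu _ ⟨mem_of_mem_nhds hs, hθ⟩)).differentiableAt.hasDerivAt
  exact ((hd x hx).sub (HasDerivAt.fun_sum fun i hi =>
    (hd (t i) (ht i (Finset.mem_range.1 hi))).mul_const (e i x))).deriv

end Slices

section WeightedNorms

theorem lintegral_lintegral_mul_le {s T : Set ℝ} (hs : MeasurableSet s) {a b : ℝ → ℝ}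
    (hab : ∀ r ∈ s, 0 ≤ a r ∧ a r ≤ b r) {v w : ℝ × ℝ → ℝ} {c : ℝ}
    (hvw : ∀ r ∈ s, ∫⁻ θ in T, ENNReal.ofReal (v (r, θ) ^ 2)
      ≤ ENNReal.ofReal c * ∫⁻ θ in T, ENNReal.ofReal (w (r, θ) ^ 2)) :
    ∫⁻ r in s, ∫⁻ θ in T, ENNReal.ofReal (v (r, θ) ^ 2 * a r)
      ≤ ENNReal.ofReal c *
          ∫⁻ r in s, ∫⁻ θ in T, ENNReal.ofReal (w (r, θ) ^ 2 * b r) := by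
  rw [← lintegral_const_mul' _ _ ENNReal.ofReal_ne_top]
  refine setLIntegral_mono' hs fun r hr => ?_
  obtain ⟨ha, hab⟩ := hab r hr
  simp_rw [ENNReal.ofReal_mul' ha, ENNReal.ofReal_mul' (ha.trans hab)]
  rw [lintegral_mul_const' _ _ ENNReal.ofReal_ne_top,
    lintegral_mul_const' _ _ ENNReal.ofReal_ne_top, ← mul_assoc]
  exact mul_le_mul' (hvw r hr) (ENNReal.ofReal_le_ofReal hab)

theorem le_inv_of_mem_Ioo {r : ℝ} (hr : r ∈ Ioo (0 : ℝ) 1) : r ≤ r⁻¹ :=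
  hr.2.le.trans ((one_le_inv₀ hr.1).2 hr.2.le)

variable {u : ℝ × ℝ → ℝ} {N : ℕ} {t : ℕ → ℝ} {e : ℕ → ℝ → ℝ} {h : ℝ}

theorem IsHatBasis.wL2r_sub_interp_le (hb : IsHatBasis N t e)
    (ht : StrictMonoOn t (Iic (N - 1))) (ht0 : t 0 = 0)
    (hgap : ∀ j, j + 1 < N → t (j + 1) - t j ≤ h)
    (hu : ContDiffOn ℝ 2 u (Icc (0 : ℝ) 1 ×ˢ Icc (t 0) (t (N - 1)))) :
    wL2r (t (N - 1)) (fun p => u p - interp N t e u p)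
      ≤ ENNReal.ofReal (h ^ 2 * h ^ 2) * wL2invr (t (N - 1)) (pd2 (pd2 u)) := by
  simp only [wL2r, wL2invr, div_eq_mul_inv]
  refine lintegral_lintegral_mul_le (v := fun p => u p - interp N t e u p) (w := pd2 (pd2 u))
    measurableSet_Ioo (fun r hr => ⟨hr.1.le, le_inv_of_mem_Ioo hr⟩) fun r hr => ?_
  rw [← ht0]
  exact hb.lintegral_sub_nodalInterp_sq_le_deriv_deriv ht hgap
    (contDiffOn_snd_slice hu (Ioo_subset_Icc_self hr))

theorem IsHatBasis.wL2r_pd1_sub_interp_le (hb : IsHatBasis N t e)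
    (ht : StrictMonoOn t (Iic (N - 1))) (ht0 : t 0 = 0)
    (hgap : ∀ j, j + 1 < N → t (j + 1) - t j ≤ h)
    (hu : ContDiffOn ℝ 2 u (Icc (0 : ℝ) 1 ×ˢ Icc (t 0) (t (N - 1))))
    (hS : UniqueDiffOn ℝ (Icc (0 : ℝ) 1 ×ˢ Icc (t 0) (t (N - 1)))) :
    wL2r (t (N - 1)) (pd1 (fun p => u p - interp N t e u p))
      ≤ ENNReal.ofReal (h ^ 2) * wL2r (t (N - 1)) (pd2 (pd1 u)) := by
  refine lintegral_lintegral_mul_le (v := pd1 (fun p => u p - interp N t e u p))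
    (w := pd2 (pd1 u)) measurableSet_Ioo (fun r hr => ⟨hr.1.le, le_rfl⟩) fun r hr => ?_
  have hs : Icc (0 : ℝ) 1 ∈ 𝓝 r := Icc_mem_nhds hr.1 hr.2
  have hnodes : ∀ i < N, t i ∈ Icc (t 0) (t (N - 1)) := fun i hi =>
    ⟨ht.monotoneOn (mem_Iic.2 (Nat.zero_le _)) (mem_Iic.2 (by omega)) (Nat.zero_le i),
      ht.monotoneOn (mem_Iic.2 (by omega)) (mem_Iic.2 le_rfl) (by omega)⟩
  rw [← ht0, setLIntegral_congr_fun measurableSet_Ioo fun x hx => by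
    rw [pd1_sub_interp hs (hu.differentiableOn two_ne_zero) hnodes (Ioo_subset_Icc_self hx)]]
  exact hb.lintegral_sub_nodalInterp_sq_le_deriv ht hgap
    (contDiffOn_pd1_slice hu hS (by norm_num) hs)

theorem IsHatBasis.wL2invr_pd2_sub_le (hb : IsHatBasis N t e)
    (ht : StrictMonoOn t (Iic (N - 1))) (ht0 : t 0 = 0)
    (hgap : ∀ j, j + 1 < N → t (j + 1) - t j ≤ h)
    (hu : ContDiffOn ℝ 2 u (Icc (0 : ℝ) 1 ×ˢ Icc (t 0) (t (N - 1)))) :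
    wL2invr (t (N - 1))
        (fun p => pd2 u p - ∑ i ∈ Finset.range N, u (p.1, t i) * deriv (e i) p.2)
      ≤ ENNReal.ofReal (h ^ 2) * wL2invr (t (N - 1)) (pd2 (pd2 u)) := by
  simp only [wL2invr, div_eq_mul_inv]
  refine lintegral_lintegral_mul_le (w := pd2 (pd2 u))
    (v := fun p => pd2 u p - ∑ i ∈ Finset.range N, u (p.1, t i) * deriv (e i) p.2)
    measurableSet_Ioo (fun r hr => ⟨inv_nonneg.2 hr.1.le, le_rfl⟩) fun r hr => ?_
  rw [← ht0]
  exact hb.lintegral_deriv_sub_sq_le_deriv_deriv (f := fun θ => u (r, θ)) ht hgap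
    (contDiffOn_snd_slice hu (Ioo_subset_Icc_self hr))

theorem add_add_le_ofReal_mul_add {h : ℝ} {X Y Z I J : ℝ≥0∞}
    (hX : X ≤ ENNReal.ofReal (h ^ 2 * h ^ 2) * J) (hY : Y ≤ ENNReal.ofReal (h ^ 2) * I)
    (hZ : Z ≤ ENNReal.ofReal (h ^ 2) * J) :
    X + Y + Z ≤ ENNReal.ofReal (h ^ 2 * (h ^ 2 + 4)) * (I + J) := by
  have hJ : ENNReal.ofReal (h ^ 2 * h ^ 2) + ENNReal.ofReal (h ^ 2)
      ≤ ENNReal.ofReal (h ^ 2 * (h ^ 2 + 4)) := by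
    rw [← ENNReal.ofReal_add (by positivity) (by positivity)]
    exact ENNReal.ofReal_le_ofReal (by nlinarith [sq_nonneg h])
  have hI : ENNReal.ofReal (h ^ 2) ≤ ENNReal.ofReal (h ^ 2 * (h ^ 2 + 4)) :=
    ENNReal.ofReal_le_ofReal (by nlinarith [sq_nonneg h])
  calc X + Y + Z
      ≤ ENNReal.ofReal (h ^ 2 * h ^ 2) * J + ENNReal.ofReal (h ^ 2) * I
          + ENNReal.ofReal (h ^ 2) * J := by gcongr
    _ = ENNReal.ofReal (h ^ 2) * I
          + (ENNReal.ofReal (h ^ 2 * h ^ 2) + ENNReal.ofReal (h ^ 2)) * J := by ring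
    _ ≤ _ := by rw [mul_add]; gcongr

end WeightedNorms

end WeightedInterpolation

open WeightedInterpolation in
theorem stmt11_general (Θ : ℝ) (hΘ₀ : 0 < Θ)
    (N : ℕ) (t : ℕ → ℝ) (e : ℕ → ℝ → ℝ)
    (ht0 : t 0 = 0) (htN : t (N - 1) = Θ)
    (htmono : ∀ j, j + 1 < N → t j < t (j + 1))
    (hnode : ∀ i < N, ∀ j < N, e i (t j) = if i = j then 1 else 0)
    (hlin : ∀ i < N, ∀ j, j + 1 < N → ∀ x ∈ Icc (t j) (t (j + 1)),
      e i x = e i (t j) + (e i (t (j + 1)) - e i (t j)) * (x - t j) / (t (j + 1) - t j))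
    (h : ℝ) (hmax : IsGreatest ((fun j => t (j + 1) - t j) '' {j : ℕ | j + 1 < N}) h)
    (u : ℝ × ℝ → ℝ) (hu : ContDiffOn ℝ 2 u (Icc (0:ℝ) 1 ×ˢ Icc (0:ℝ) Θ))
    (dε : ℝ × ℝ → ℝ)
    (hdε : ∀ p, dε p = pd2 u p - ∑ i ∈ Finset.range N, u (p.1, t i) * deriv (e i) p.2) :
    wL2r Θ (fun p => u p - interp N t e u p)
        + wL2r Θ (pd1 (fun p => u p - interp N t e u p))
        + wL2invr Θ dε
      ≤ ENNReal.ofReal (h ^ 2 * (h ^ 2 + 4)) *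
          (wL2r Θ (pd2 (pd1 u)) + wL2invr Θ (pd2 (pd2 u))) := by
  obtain rfl : dε = _ := funext hdε
  subst htN
  have hb : IsHatBasis N t e := ⟨hnode, fun i hi j hj x hx => by
    rw [hlin i hi j hj x hx, linInterp, slope_def_field]; ring⟩
  have ht : StrictMonoOn t (Iic (N - 1)) :=
    strictMonoOn_Iic_of_lt_succ fun m hm => htmono m (by omega)
  have hgap : ∀ j, j + 1 < N → t (j + 1) - t j ≤ h := fun j hj => hmax.2 ⟨j, hj, rfl⟩
  replace hu : ContDiffOn ℝ 2 u (Icc (0 : ℝ) 1 ×ˢ Icc (t 0) (t (N - 1))) := by rwa [ht0]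
  have hS : UniqueDiffOn ℝ (Icc (0 : ℝ) 1 ×ˢ Icc (t 0) (t (N - 1))) :=
    (uniqueDiffOn_Icc one_pos).prod (uniqueDiffOn_Icc (ht0 ▸ hΘ₀))
  exact add_add_le_ofReal_mul_add (hb.wL2r_sub_interp_le ht ht0 hgap hu)
    (hb.wL2r_pd1_sub_interp_le ht ht0 hgap hu hS) (hb.wL2invr_pd2_sub_le ht ht0 hgap hu)

/-- Weighted `H¹` interpolation error estimate: for `u` twice
continuously differentiable on `[0,1] × [0,Θ]`,
`‖u − Πu‖²_{L²_r} + ‖∂_r(u − Πu)‖²_{L²_r} + ‖∂_θ(u − Πu)‖²_{L²_{1/r}}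
  ≤ h²(h² + 4)(‖∂_{rθ} u‖²_{L²_r} + ‖∂_{θθ} u‖²_{L²_{1/r}})` in `[0,∞]`,
where `h = max_j (θ_{j+1} − θ_j)` and `∂_θ(u − Πu)(r,θ) = ∂_θ u(r,θ) − Σ_i u(r,θ_i) e_i′(θ)`
is defined for `θ` outside the partition nodes. -/
theorem stmt11 (Θ : ℝ) (hΘ₀ : 0 < Θ) (hΘ₂ : Θ < 2 * π)
    (N : ℕ) (hN : 2 ≤ N) (t : ℕ → ℝ) (e : ℕ → ℝ → ℝ)
    (ht0 : t 0 = 0) (htN : t (N - 1) = Θ)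
    (htmono : ∀ j, j + 1 < N → t j < t (j + 1))
    (hnode : ∀ i < N, ∀ j < N, e i (t j) = if i = j then 1 else 0)
    (hlin : ∀ i < N, ∀ j, j + 1 < N → ∀ x ∈ Icc (t j) (t (j + 1)),
      e i x = e i (t j) + (e i (t (j + 1)) - e i (t j)) * (x - t j) / (t (j + 1) - t j))
    (h : ℝ) (hmax : IsGreatest ((fun j => t (j + 1) - t j) '' {j : ℕ | j + 1 < N}) h)
    (u : ℝ × ℝ → ℝ) (hu : ContDiffOn ℝ 2 u (Icc (0:ℝ) 1 ×ˢ Icc (0:ℝ) Θ))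
    (dε : ℝ × ℝ → ℝ)
    (hdε : ∀ p, dε p = pd2 u p - ∑ i ∈ Finset.range N, u (p.1, t i) * deriv (e i) p.2) :
    wL2r Θ (fun p => u p - interp N t e u p)
        + wL2r Θ (pd1 (fun p => u p - interp N t e u p))
        + wL2invr Θ dε
      ≤ ENNReal.ofReal (h ^ 2 * (h ^ 2 + 4)) *
          (wL2r Θ (pd2 (pd1 u)) + wL2invr Θ (pd2 (pd2 u))) :=
  stmt11_general Θ hΘ₀ N t e ht0 htN htmono hnode hlin h hmax u hu dε hdε
end

section
/- Assume in addition that A is symmetric positive definite and B is symmetric positive semidefinite. Then every eigenvalue λ ∈ ℂ of (the complexification of) the block matrix E is real. -/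
/-!
Write an eigenvector of `E` as `(φ, ψ)`. The eigen-equations `A⁻¹ψ = λφ`, `Bφ = λψ` give
`ψ = λAφ`, hence `Bφ = λ²Aφ` with `φ ≠ 0`. Pairing with `φ*` yields `φ*Bφ = λ² φ*Aφ`, where
`φ*Aφ > 0` and `φ*Bφ ≥ 0`, so `λ²` is a nonnegative real number and `λ` is real.
-/

open Matrix
open scoped ComplexOrder

theorem Complex.im_eq_zero_of_sq_mul_nonneg {z a : ℂ} (ha : 0 < a) (h : 0 ≤ z ^ 2 * a) :
    z.im = 0 :=
  Complex.sq_nonneg_iff.mp <| by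
    simpa [ha.ne'] using mul_nonneg h (Right.inv_pos.mpr ha).le

namespace Matrix

variable {n : Type*} [Fintype n]

theorem PosSemidef.map_ofReal {M : Matrix n n ℝ} (hM : M.PosSemidef) :
    (M.map ((↑) : ℝ → ℂ)).PosSemidef := by
  classical
  open scoped MatrixOrder in
  obtain ⟨C, rfl⟩ := CStarAlgebra.nonneg_iff_eq_star_mul_self.mp hM.nonneg
  have hmap : (star C * C).map ((↑) : ℝ → ℂ) = (C.map (↑))ᴴ * C.map (↑) := by
    rw [star_eq_conjTranspose, ← conjTranspose_map _ fun x => (Complex.conj_ofReal x).symm]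
    exact Matrix.map_mul (f := Complex.ofRealHom)
  rw [hmap]
  exact posSemidef_conjTranspose_mul_self _

theorem PosDef.map_ofReal {M : Matrix n n ℝ} (hM : M.PosDef) :
    (M.map ((↑) : ℝ → ℂ)).PosDef := by
  classical
  exact hM.posSemidef.map_ofReal.posDef_iff_isUnit.mpr
    (hM.isUnit.map Complex.ofRealHom.mapMatrix)

variable [DecidableEq n]

theorem exists_mulVec_eq_sq_smul_of_mem_spectrum_fromBlocks {K : Type*} [Field K]
    {A P B : Matrix n n K} (hAP : A * P = 1) {μ : K}
    (hμ : μ ∈ spectrum K (fromBlocks 0 P B 0)) :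
    ∃ φ ≠ 0, B *ᵥ φ = μ ^ 2 • (A *ᵥ φ) := by
  rw [← spectrum_toLin', ← Module.End.hasEigenvalue_iff_mem_spectrum] at hμ
  obtain ⟨v, hv⟩ := hμ.exists_hasEigenvector
  have hEv : fromBlocks 0 P B 0 *ᵥ v = μ • v := hv.apply_eq_smul
  set φ := v ∘ Sum.inl
  set ψ := v ∘ Sum.inr
  have hP : P *ᵥ ψ = μ • φ := funext fun i => by
    simpa [fromBlocks_mulVec, φ, ψ] using congrFun hEv (Sum.inl i)
  have hB : B *ᵥ φ = μ • ψ := funext fun i => by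
    simpa [fromBlocks_mulVec, φ, ψ] using congrFun hEv (Sum.inr i)
  have hψ : ψ = μ • (A *ᵥ φ) := by rw [← mulVec_smul, ← hP, mulVec_mulVec, hAP, one_mulVec]
  refine ⟨φ, fun hφ => hv.2 ?_, by rw [hB, hψ, smul_smul, sq]⟩
  rw [← Sum.elim_comp_inl_inr v]
  change Sum.elim φ ψ = 0
  rw [hψ, hφ, mulVec_zero, smul_zero, Sum.elim_zero_zero]

theorem im_eq_zero_of_mem_spectrum_fromBlocks {A P B : Matrix n n ℂ}
    (hA : A.PosDef) (hB : B.PosSemidef) (hAP : A * P = 1) {z : ℂ}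
    (hz : z ∈ spectrum ℂ (fromBlocks 0 P B 0)) : z.im = 0 := by
  obtain ⟨φ, hφ, h⟩ := exists_mulVec_eq_sq_smul_of_mem_spectrum_fromBlocks hAP hz
  refine Complex.im_eq_zero_of_sq_mul_nonneg (hA.dotProduct_mulVec_pos hφ) ?_
  simpa [h, dotProduct_smul] using hB.dotProduct_mulVec_nonneg φ

end Matrix

theorem stmt14_general (N : ℕ)
    (A B : Matrix (Fin N) (Fin N) ℝ)
    (hApd : A.PosDef) (hBpsd : B.PosSemidef)
    (lam : ℂ)
    (hlam : lam ∈ spectrum ℂ ((Matrix.fromBlocks 0 A⁻¹ B 0).map (Complex.ofReal ·))) :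
    lam.im = 0 := by
  have hAinv : A.map ((↑) : ℝ → ℂ) * A⁻¹.map (↑) = 1 :=
    calc _ = (A * A⁻¹).map ((↑) : ℝ → ℂ) := (Matrix.map_mul (f := Complex.ofRealHom)).symm
      _ = 1 := by
        rw [mul_nonsing_inv A ((isUnit_iff_isUnit_det A).mp hApd.isUnit)]
        exact Matrix.map_one _ Complex.ofReal_zero Complex.ofReal_one
  rw [fromBlocks_map, Matrix.map_zero _ Complex.ofReal_zero] at hlam
  exact im_eq_zero_of_mem_spectrum_fromBlocks hApd.map_ofReal hBpsd.map_ofReal hAinv hlam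

/-- If `A` is symmetric positive definite and `B` is symmetric
positive semidefinite, then every eigenvalue `λ ∈ ℂ` of (the complexification of)
the block matrix `E = [[0, A⁻¹],[B, 0]]` is real. -/
theorem stmt14 (N : ℕ) (hN : 1 ≤ N)
    (A B : Matrix (Fin N) (Fin N) ℝ) (hA : IsUnit A.det)
    (hApd : A.PosDef) (hBpsd : B.PosSemidef)
    (lam : ℂ)
    (hlam : lam ∈ spectrum ℂ ((Matrix.fromBlocks 0 A⁻¹ B 0).map (Complex.ofReal ·))) :
    lam.im = 0 :=
  stmt14_general N A B hApd hBpsd lam hlam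
end
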